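/- arXiv:0907.1338 — 9 statements merged into one kernel-verified Lean document; each statement's English description precedes it below -/
import Mathlib

section
/- Let Γ be a connected graph and G ≤ Aut(Γ) act transitively on both vertices and edges, with N ⊴ G nontrivial and vertex-intransitive. Then no edge of Γ joins two vertices lying in the same N-orbit. -/
open MulAction

/-- The normal quotient graph: vertices are the `N`-orbits, two distinct orbits
being adjacent when some vertex of one is adjacent in `Γ` to some vertex of the other. -/
def quotientGraph {V G : Type*} (Γ : SimpleGraph V) [Group G] [MulAction G V]
    (N : Subgroup G) : SimpleGraph (Quotient (orbitRel N V)) where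
  Adj X Y := X ≠ Y ∧ ∃ x y : V, Quotient.mk (orbitRel N V) x = X ∧
    Quotient.mk (orbitRel N V) y = Y ∧ Γ.Adj x y
  symm := by
    constructor
    rintro X Y ⟨hne, x, y, hx, hy, hxy⟩
    exact ⟨hne.symm, y, x, hy, hx, hxy.symm⟩
  loopless := by constructor; rintro X ⟨h, -⟩; exact h rfl

/-!
Since `N` is normal, `G` permutes the `N`-orbits, so `G` maps an edge inside an `N`-orbit to
an edge inside an `N`-orbit. By edge-transitivity, one edge inside an orbit would force every
edge to lie inside an orbit; connectivity would then put all vertices in a single `N`-orbit,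
contradicting the intransitivity of `N`.
-/

theorem SimpleGraph.Reachable.rel_of_adj_le {V : Type*} {Γ : SimpleGraph V} {r : V → V → Prop}
    (hr : Equivalence r) (hadj : Γ.Adj ≤ r) {u v : V} (huv : Γ.Reachable u v) : r u v := by
  rw [SimpleGraph.reachable_iff_reflTransGen] at huv
  exact Relation.reflTransGen_le_of_equivalence_of_le hr hadj u v huv

theorem MulAction.orbitRel_smul_of_normal {G α : Type*} [Group G] [MulAction G α]
    {N : Subgroup G} [N.Normal] (g : G) {a b : α} (hab : orbitRel N α a b) :
    orbitRel N α (g • a) (g • b) := by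
  rw [orbitRel_apply, ← smul_orbit_eq_orbit_smul]
  exact Set.smul_mem_smul_set hab

theorem adj_le_orbitRel_of_adj_of_orbitRel {V G : Type*} [Group G] [MulAction G V]
    {Γ : SimpleGraph V} {N : Subgroup G} [N.Normal]
    (hedge : ∀ u v x y : V, Γ.Adj u v → Γ.Adj x y →
      ∃ g : G, (g • u = x ∧ g • v = y) ∨ (g • u = y ∧ g • v = x))
    {x y : V} (hxy : Γ.Adj x y) (hrel : orbitRel N V x y) :
    Γ.Adj ≤ orbitRel N V := by
  intro u v huv
  obtain ⟨g, ⟨rfl, rfl⟩ | ⟨rfl, rfl⟩⟩ := hedge x y u v hxy huv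
  · exact orbitRel_smul_of_normal g hrel
  · exact (orbitRel N V).symm (orbitRel_smul_of_normal g hrel)

theorem stmt4_general {V G : Type*} [Group G] [MulAction G V]
    (Γ : SimpleGraph V)
    (hconn : Γ.Connected)
    (hedge : ∀ u v x y : V, Γ.Adj u v → Γ.Adj x y →
      ∃ g : G, (g • u = x ∧ g • v = y) ∨ (g • u = y ∧ g • v = x))
    (N : Subgroup G) (hN : N.Normal)
    (hNintrans : ¬ MulAction.IsPretransitive N V) :
    ∀ x y : V, Quotient.mk (orbitRel N V) x = Quotient.mk (orbitRel N V) y →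
      ¬ Γ.Adj x y := by
  intro x y hxy hadj
  have hedges : Γ.Adj ≤ orbitRel N V :=
    adj_le_orbitRel_of_adj_of_orbitRel hedge hadj (Quotient.eq.mp hxy)
  refine hNintrans ⟨fun a b => ?_⟩
  exact (hconn.preconnected b a).rel_of_adj_le (orbitRel N V).iseqv hedges

/-- If `G` is vertex- and edge-transitive on a connected graph `Γ` and `N ⊴ G` is
nontrivial and vertex-intransitive, then no edge of `Γ` joins two vertices of the
same `N`-orbit. -/
theorem stmt4 {V G : Type*} [Fintype V] [Group G] [MulAction G V]
    (Γ : SimpleGraph V)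
    (hact : ∀ (g : G) (u v : V), Γ.Adj (g • u) (g • v) ↔ Γ.Adj u v)
    (hconn : Γ.Connected)
    (hvtrans : MulAction.IsPretransitive G V)
    (hedge : ∀ u v x y : V, Γ.Adj u v → Γ.Adj x y →
      ∃ g : G, (g • u = x ∧ g • v = y) ∨ (g • u = y ∧ g • v = x))
    (N : Subgroup G) (hN : N.Normal) (hNbot : N ≠ ⊥)
    (hNintrans : ¬ MulAction.IsPretransitive N V) :
    ∀ x y : V, Quotient.mk (orbitRel N V) x = Quotient.mk (orbitRel N V) y →
      ¬ Γ.Adj x y :=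
  stmt4_general Γ hconn hedge N hN hNintrans
end

section
/- Let Γ be a connected strongly regular graph with parameters (n,k,λ,μ), G ≤ Aut(Γ) transitive on vertices and edges, N ⊴ G nontrivial and intransitive, with N-orbits of common size b, such that Γ is an ℓ-multicover of Γ_N. Then for any two non-adjacent vertices X, Y of Γ_N, the number μ'_{X,Y} of common neighbours of X and Y in Γ_N equals bμ/ℓ². In particular this number is independent of the choice of X, Y. -/
open MulAction

/-!
Fix a vertex `x` in the orbit `X` and count the pairs `(y, z)` with `y ∈ Y` and `z` a common
neighbour of `x` and `y`. Each of the `b` vertices `y ∈ Y` is non-adjacent to `x`, so it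
contributes `μ` pairs. On the other side, a neighbour `z` of `x` is adjacent to exactly `ℓ`
vertices of `Y` when its orbit is adjacent to `Y`, and to none otherwise. Such orbits are exactly
the common neighbours `Z` of `X` and `Y`, and each contains `ℓ` neighbours of `x`. Hence
`b μ = ℓ · ℓ · μ'_{X,Y}`.
-/

open Finset

def IsMulticover {V G : Type*} [Group G] [MulAction G V] (Γ : SimpleGraph V)
    (N : Subgroup G) (ℓ : ℕ) : Prop :=
  ∀ X Y : Quotient (orbitRel N V), (quotientGraph Γ N).Adj X Y →
    ∀ x : V, Quotient.mk (orbitRel N V) x = X →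
      {y : V | Γ.Adj x y ∧ Quotient.mk (orbitRel N V) y = Y}.ncard = ℓ

namespace quotientGraph

variable {V G : Type*} [Group G] [MulAction G V] {Γ : SimpleGraph V} {N : Subgroup G} {ℓ : ℕ}

local notation "π" => Quotient.mk (orbitRel N V)

theorem adj_mk_of_adj {x y : V} (hxy : π x ≠ π y) (h : Γ.Adj x y) :
    (quotientGraph Γ N).Adj (π x) (π y) :=
  ⟨hxy, x, y, rfl, rfl, h⟩

theorem ncard_adj_adj_mk_eq_mul [Finite V] (hmc : IsMulticover Γ N ℓ) (x : V)
    (P : Quotient (orbitRel N V) → Prop) :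
    {z | Γ.Adj x z ∧ (quotientGraph Γ N).Adj (π x) (π z) ∧ P (π z)}.ncard =
      ℓ * {Z | (quotientGraph Γ N).Adj (π x) Z ∧ P Z}.ncard := by
  classical
  have := Fintype.ofFinite V
  simp only [Set.ncard_eq_toFinset_card', Set.toFinset_ofPred]
  rw [card_eq_sum_card_fiberwise (f := π) (t := {Z | (quotientGraph Γ N).Adj (π x) Z ∧ P Z})
    (by intro z hz; simp_all), mul_comm, ← smul_eq_mul, ← sum_const]
  refine sum_congr rfl fun Z hZ => ?_
  rw [mem_filter] at hZ
  rw [← hmc _ _ hZ.2.1 x rfl, Set.ncard_eq_toFinset_card', Set.toFinset_ofPred, filter_filter]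
  congr 1
  ext z
  simp only [mem_filter, mem_univ, true_and]
  constructor
  · rintro ⟨⟨h, -⟩, rfl⟩; exact ⟨h, rfl⟩
  · rintro ⟨h, rfl⟩; exact ⟨⟨h, hZ.2⟩, rfl⟩

theorem ncard_orbit_mul_eq [Fintype V] (hmc : IsMulticover Γ N ℓ) {x : V}
    {Y : Quotient (orbitRel N V)} {μ : ℕ} (hxY : π x ≠ Y)
    (hnadj : ¬ (quotientGraph Γ N).Adj (π x) Y)
    (hμ : ∀ y, π y = Y → (Γ.commonNeighbors x y).ncard = μ) :
    (orbitRel.Quotient.orbit Y).ncard * μ =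
      ℓ * {z | Γ.Adj x z ∧ (quotientGraph Γ N).Adj (π z) Y}.ncard := by
  classical
  set s : Finset V := {y | π y = Y}
  set t : Finset V := {z | Γ.Adj x z}
  have hs : (orbitRel.Quotient.orbit Y).ncard = #s := by
    rw [show orbitRel.Quotient.orbit Y = {y | π y = Y} from
      Set.ext fun _ => orbitRel.Quotient.mem_orbit, Set.ncard_eq_toFinset_card',
      Set.toFinset_ofPred]
  have hcommon : ∀ y ∈ s, #(t.bipartiteAbove Γ.Adj y) = μ := by
    intro y hy
    rw [← hμ y (mem_filter.1 hy).2, Set.ncard_eq_toFinset_card']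
    congr 1
    ext z
    simp [t, bipartiteAbove, SimpleGraph.mem_commonNeighbors]
  have hbelow : ∀ z ∈ t, #(s.bipartiteBelow Γ.Adj z) =
      if (quotientGraph Γ N).Adj (π z) Y then ℓ else 0 := by
    intro z hz
    have hxz : Γ.Adj x z := (mem_filter.1 hz).2
    have hzY : π z ≠ Y := by
      rintro rfl
      exact hnadj (adj_mk_of_adj hxY hxz)
    have hcard : #(s.bipartiteBelow Γ.Adj z) = {y | Γ.Adj z y ∧ π y = Y}.ncard := by
      rw [Set.ncard_eq_toFinset_card']
      congr 1
      ext y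
      simp [s, bipartiteBelow, and_comm, Γ.adj_comm]
    rw [hcard]
    split_ifs with hadj
    · exact hmc _ _ hadj z rfl
    · convert Set.ncard_empty V
      ext y
      simp only [Set.mem_ofPred_eq, Set.mem_empty_iff_false, iff_false, not_and]
      rintro hzy rfl
      exact hadj (adj_mk_of_adj hzY hzy)
  have hdouble := sum_card_bipartiteAbove_eq_sum_card_bipartiteBelow (s := s) (t := t) (r := Γ.Adj)
  rw [sum_congr rfl hcommon, sum_congr rfl hbelow, sum_const, smul_eq_mul, ← sum_filter,
    sum_const, smul_eq_mul, filter_filter] at hdouble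
  rw [hs, hdouble, mul_comm, Set.ncard_eq_toFinset_card', Set.toFinset_ofPred]

end quotientGraph

open quotientGraph in
theorem stmt7_general {V G : Type*} [Fintype V] [Group G] [MulAction G V]
    (Γ : SimpleGraph V) [DecidableRel Γ.Adj] (n k l μ b ℓ : ℕ)
    (hsrg : Γ.IsSRGWith n k l μ)
    (N : Subgroup G)
    (hb : ∀ v : V, (MulAction.orbit N v).ncard = b)
    (hmc : ∀ X Y : Quotient (orbitRel N V), (quotientGraph Γ N).Adj X Y →
      ∀ x : V, Quotient.mk (orbitRel N V) x = X →
        ({y : V | Γ.Adj x y ∧ Quotient.mk (orbitRel N V) y = Y}).ncard = ℓ) :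
    ∀ X Y : Quotient (orbitRel N V), X ≠ Y → ¬ (quotientGraph Γ N).Adj X Y →
      ℓ ^ 2 * ({Z : Quotient (orbitRel N V) |
        (quotientGraph Γ N).Adj X Z ∧ (quotientGraph Γ N).Adj Y Z}).ncard = b * μ := by
  rintro X Y hXY hnadj
  obtain ⟨x, rfl⟩ := Quotient.exists_rep X
  have horbit : (orbitRel.Quotient.orbit Y).ncard = b := by
    obtain ⟨y, rfl⟩ := Quotient.exists_rep Y
    exact hb y
  have hμ : ∀ y, Quotient.mk (orbitRel N V) y = Y → (Γ.commonNeighbors x y).ncard = μ := by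
    rintro y rfl
    rw [← Nat.card_coe_set_eq, Nat.card_eq_fintype_card]
    exact hsrg.of_not_adj (fun h => hXY (congrArg _ h)) fun h => hnadj (adj_mk_of_adj hXY h)
  have hneighbors_adj_Y : {z | Γ.Adj x z ∧ (quotientGraph Γ N).Adj (Quotient.mk _ z) Y} =
      {z | Γ.Adj x z ∧ (quotientGraph Γ N).Adj (Quotient.mk _ x) (Quotient.mk _ z) ∧
        (quotientGraph Γ N).Adj Y (Quotient.mk _ z)} := by
    ext z
    refine and_congr_right fun hxz =>
      ⟨fun hzY => ⟨adj_mk_of_adj (fun hxz' => hnadj (hxz' ▸ hzY)) hxz, hzY.symm⟩,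
        fun h => h.2.symm⟩
  rw [← horbit, ncard_orbit_mul_eq hmc hXY hnadj hμ, hneighbors_adj_Y,
    ncard_adj_adj_mk_eq_mul hmc, sq, mul_assoc]

/-- If `Γ` is a connected vertex- and edge-transitive strongly regular graph, `N ⊴ G`
nontrivial and intransitive with all orbits of size `b`, and `Γ` is an `ℓ`-multicover of
`Γ_N`, then for any two non-adjacent vertices `X ≠ Y` of `Γ_N`, the number `μ'` of their
common neighbours in `Γ_N` satisfies `ℓ² μ' = b μ`, i.e. `μ' = bμ/ℓ²`, independent of
the choice of `X` and `Y`. -/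
theorem stmt7 {V G : Type*} [Fintype V] [Group G] [MulAction G V]
    (Γ : SimpleGraph V) [DecidableRel Γ.Adj] (n k l μ b ℓ : ℕ)
    (hsrg : Γ.IsSRGWith n k l μ) (hconn : Γ.Connected)
    (hact : ∀ (g : G) (u v : V), Γ.Adj (g • u) (g • v) ↔ Γ.Adj u v)
    (hvtrans : MulAction.IsPretransitive G V)
    (hedge : ∀ u v x y : V, Γ.Adj u v → Γ.Adj x y →
      ∃ g : G, (g • u = x ∧ g • v = y) ∨ (g • u = y ∧ g • v = x))
    (N : Subgroup G) (hN : N.Normal) (hNbot : N ≠ ⊥)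
    (hNintrans : ¬ MulAction.IsPretransitive N V)
    (hb : ∀ v : V, (MulAction.orbit N v).ncard = b)
    (hmc : ∀ X Y : Quotient (orbitRel N V), (quotientGraph Γ N).Adj X Y →
      ∀ x : V, Quotient.mk (orbitRel N V) x = X →
        ({y : V | Γ.Adj x y ∧ Quotient.mk (orbitRel N V) y = Y}).ncard = ℓ) :
    ∀ X Y : Quotient (orbitRel N V), X ≠ Y → ¬ (quotientGraph Γ N).Adj X Y →
      ℓ ^ 2 * ({Z : Quotient (orbitRel N V) |
        (quotientGraph Γ N).Adj X Z ∧ (quotientGraph Γ N).Adj Y Z}).ncard = b * μ :=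
  stmt7_general Γ n k l μ b ℓ hsrg N hb hmc
end

section
/- Every normal quotient of a connected vertex- and edge-transitive strongly regular graph is itself a connected vertex- and edge-transitive strongly regular graph. -/
/-!
Since `Γ` is connected and `N` is intransitive, edge-transitivity puts the two ends of every edge
in distinct `N`-orbits. All `N`-orbits have the same size `m`, so double counting the edges
between two orbits shows that `v` has as many neighbours in the orbit of `w` as `w` has in the
orbit of `v`; with edge-transitivity this number is the same constant `c > 0` for every edge `vw`.
Thus a vertex has `c` or `0` neighbours in an orbit `C` according as its own orbit is adjacent to
`C` in `Γ_N` or not. For distinct orbits `B`, `C`, counting in two ways the triples `(b, c, w)`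
with `b ∈ B`, `c ∈ C` and `w` adjacent to both gives `c² · |Γ_N(B) ∩ Γ_N(C)| = λ a + μ (m - a)`,
where `a` is `c` or `0`; hence `Γ_N` is strongly regular, of valency `k / c`.
-/

open MulAction

open Finset SimpleGraph

lemma SimpleGraph.card_commonNeighbors_eq_card_filter {W : Type*} [Fintype W] (H : SimpleGraph W)
    [DecidableRel H.Adj] (x y : W) [Fintype (H.commonNeighbors x y)] :
    Fintype.card (H.commonNeighbors x y) = #{z | H.Adj z x ∧ H.Adj z y} := by
  rw [← Set.toFinset_card]
  congr 1
  ext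
  simp [mem_commonNeighbors, H.adj_comm]

lemma SimpleGraph.Reachable.apply_eq_of_forall_adj {V β : Type*} {Γ : SimpleGraph V} {f : V → β}
    (hf : ∀ x y, Γ.Adj x y → f x = f y) {u v : V} (huv : Γ.Reachable u v) : f u = f v := by
  rw [reachable_iff_reflTransGen] at huv
  induction huv with
  | refl => rfl
  | tail _ hbc ih => exact ih.trans (hf _ _ hbc)

section NormalQuotient

variable {V G : Type*} [Group G] [MulAction G V] {N : Subgroup G}

local notation "⟦" x "⟧ₙ" => Quotient.mk (orbitRel N V) x

lemma mk_eq_mk_iff_mem_orbit {x y : V} : ⟦x⟧ₙ = ⟦y⟧ₙ ↔ x ∈ orbit N y :=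
  Quotient.eq.trans orbitRel_apply

lemma mk_coe_smul (n : N) (x : V) : ⟦(n : G) • x⟧ₙ = ⟦x⟧ₙ :=
  mk_eq_mk_iff_mem_orbit.2 (mem_orbit x n)

lemma mk_smul_eq_mk_smul [N.Normal] (g : G) {x y : V} (h : ⟦x⟧ₙ = ⟦y⟧ₙ) :
    ⟦g • x⟧ₙ = ⟦g • y⟧ₙ := by
  rw [mk_eq_mk_iff_mem_orbit] at h ⊢
  rw [← smul_orbit_eq_orbit_smul]
  exact Set.smul_mem_smul_set h

lemma mk_smul_eq_mk_smul_iff [N.Normal] (g : G) {x y : V} : ⟦g • x⟧ₙ = ⟦g • y⟧ₙ ↔ ⟦x⟧ₙ = ⟦y⟧ₙ :=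
  ⟨fun h => by simpa using mk_smul_eq_mk_smul g⁻¹ h, mk_smul_eq_mk_smul g⟩

lemma mk_ne_mk_of_adj [N.Normal] {Γ : SimpleGraph V} (hconn : Γ.Connected)
    (hedge : ∀ u v x y : V, Γ.Adj u v → Γ.Adj x y →
      ∃ g : G, (g • u = x ∧ g • v = y) ∨ (g • u = y ∧ g • v = x))
    (hNintrans : ¬ IsPretransitive N V) {u v : V} (huv : Γ.Adj u v) : ⟦u⟧ₙ ≠ ⟦v⟧ₙ := by
  intro heq
  have hΓ : ∀ x y, Γ.Adj x y → ⟦x⟧ₙ = ⟦y⟧ₙ := by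
    intro x y hxy
    obtain ⟨g, ⟨rfl, rfl⟩ | ⟨rfl, rfl⟩⟩ := hedge u v x y huv hxy
    exacts [mk_smul_eq_mk_smul g heq, (mk_smul_eq_mk_smul g heq).symm]
  exact hNintrans ⟨fun x y =>
    mem_orbit_iff.1 (mk_eq_mk_iff_mem_orbit.1 ((hconn y x).apply_eq_of_forall_adj hΓ))⟩

lemma quotientGraph_connected {Γ : SimpleGraph V} (hconn : Γ.Connected) :
    (quotientGraph Γ N).Connected := by
  classical
  have hadj : ∀ x y, Γ.Adj x y → (quotientGraph Γ N).Reachable ⟦x⟧ₙ ⟦y⟧ₙ := fun x y hxy =>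
    if h : ⟦x⟧ₙ = ⟦y⟧ₙ then h ▸ Reachable.refl _ else Adj.reachable ⟨h, x, y, rfl, rfl, hxy⟩
  rw [connected_iff]
  refine ⟨fun X Y => ?_, hconn.nonempty.map (Quotient.mk _)⟩
  induction X, Y using Quotient.inductionOn₂ with | h x y => ?_
  simp only [reachable_iff_reflTransGen] at hadj ⊢
  exact ((reachable_iff_reflTransGen x y).1 (hconn x y)).lift' _ hadj

lemma exists_smul_mk_eq [N.Normal] [IsPretransitive G V] (X Y : Quotient (orbitRel N V)) :
    ∃ g : G, ∀ x : V, ⟦x⟧ₙ = X → ⟦g • x⟧ₙ = Y := by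
  induction X, Y using Quotient.inductionOn₂ with | h x y => ?_
  obtain ⟨g, rfl⟩ := exists_smul_eq G x y
  exact ⟨g, fun x' hx' => mk_smul_eq_mk_smul g hx'⟩

lemma exists_smul_mk_eq_of_adj [N.Normal] {Γ : SimpleGraph V}
    (hedge : ∀ u v x y : V, Γ.Adj u v → Γ.Adj x y →
      ∃ g : G, (g • u = x ∧ g • v = y) ∨ (g • u = y ∧ g • v = x))
    {X Y X' Y' : Quotient (orbitRel N V)}
    (h : (quotientGraph Γ N).Adj X Y) (h' : (quotientGraph Γ N).Adj X' Y') :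
    ∃ g : G, ∀ x y : V, ⟦x⟧ₙ = X → ⟦y⟧ₙ = Y →
      (⟦g • x⟧ₙ = X' ∧ ⟦g • y⟧ₙ = Y') ∨ (⟦g • x⟧ₙ = Y' ∧ ⟦g • y⟧ₙ = X') := by
  obtain ⟨-, x₀, y₀, rfl, rfl, h₀⟩ := h
  obtain ⟨-, x₁, y₁, rfl, rfl, h₁⟩ := h'
  obtain ⟨g, hg⟩ := hedge x₀ y₀ x₁ y₁ h₀ h₁
  refine ⟨g, fun x y hx hy => ?_⟩
  rw [mk_smul_eq_mk_smul g hx, mk_smul_eq_mk_smul g hy]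
  rcases hg with ⟨rfl, rfl⟩ | ⟨rfl, rfl⟩
  exacts [Or.inl ⟨rfl, rfl⟩, Or.inr ⟨rfl, rfl⟩]

variable [Fintype V]

open Classical in
noncomputable def block (B : Quotient (orbitRel N V)) : Finset V := {w | ⟦w⟧ₙ = B}

@[simp]
lemma mem_block {B : Quotient (orbitRel N V)} {w : V} : w ∈ block B ↔ ⟦w⟧ₙ = B := by
  simp [block]

lemma block_nonempty (B : Quotient (orbitRel N V)) : (block B).Nonempty :=
  ⟨B.out, mem_block.2 B.out_eq⟩

lemma sum_sum_block {M : Type*} [AddCommMonoid M] [Fintype (Quotient (orbitRel N V))]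
    (f : V → M) : ∑ B : Quotient (orbitRel N V), ∑ w ∈ block B, f w = ∑ w, f w := by
  classical
  convert sum_fiberwise univ (fun w => ⟦w⟧ₙ) f using 3 with B
  ext w
  simp

lemma block_smul [N.Normal] (g : G) (y : V) :
    block ⟦g • y⟧ₙ = (block ⟦y⟧ₙ).map (toPerm g).toEmbedding := by
  ext w
  rw [mem_map_equiv, mem_block, mem_block, ← mk_smul_eq_mk_smul_iff g⁻¹]
  simp

lemma card_block_eq [N.Normal] [IsPretransitive G V] (B C : Quotient (orbitRel N V)) :
    #(block B) = #(block C) := by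
  induction B, C using Quotient.inductionOn₂ with | h x y => ?_
  obtain ⟨g, rfl⟩ := exists_smul_eq G x y
  rw [block_smul, card_map]

variable (Γ : SimpleGraph V) [DecidableRel Γ.Adj]

noncomputable def blockDegree (v : V) (B : Quotient (orbitRel N V)) : ℕ :=
  #{w ∈ block B | Γ.Adj v w}

lemma degree_eq_sum_blockDegree [Fintype (Quotient (orbitRel N V))] (v : V) :
    Γ.degree v = ∑ B : Quotient (orbitRel N V), blockDegree Γ v B := by
  simp only [blockDegree, card_filter, sum_sum_block]
  rw [← card_neighborFinset_eq_degree, neighborFinset_eq_filter, card_filter]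

lemma sum_blockDegree_comm (B C : Quotient (orbitRel N V)) :
    ∑ b ∈ block B, blockDegree Γ b C = ∑ c ∈ block C, blockDegree Γ c B :=
  (sum_card_bipartiteAbove_eq_sum_card_bipartiteBelow _).trans
    (sum_congr rfl fun c _ => congrArg card (filter_congr fun b _ => Γ.adj_comm b c))

section Transitive

variable [N.Normal] (hact : ∀ (g : G) (u v : V), Γ.Adj (g • u) (g • v) ↔ Γ.Adj u v)
include hact

lemma blockDegree_smul (g : G) (v y : V) :
    blockDegree Γ (g • v) ⟦g • y⟧ₙ = blockDegree Γ v ⟦y⟧ₙ := by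
  rw [blockDegree, block_smul, filter_map, card_map]
  exact congrArg card (filter_congr fun w _ => hact g v w)

lemma blockDegree_eq_of_mk_eq {v v' : V} (h : ⟦v'⟧ₙ = ⟦v⟧ₙ) (B : Quotient (orbitRel N V)) :
    blockDegree Γ v' B = blockDegree Γ v B := by
  obtain ⟨n, rfl⟩ := mem_orbit_iff.1 (mk_eq_mk_iff_mem_orbit.1 h)
  induction B using Quotient.inductionOn with | h y => ?_
  have := blockDegree_smul (N := N) Γ hact (n : G) v y
  rwa [mk_coe_smul] at this

lemma blockDegree_comm [IsPretransitive G V] (v w : V) :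
    blockDegree Γ v ⟦w⟧ₙ = blockDegree Γ w ⟦v⟧ₙ := by
  have hsum := sum_blockDegree_comm Γ ⟦v⟧ₙ ⟦w⟧ₙ
  rw [sum_congr rfl fun b hb => blockDegree_eq_of_mk_eq Γ hact (mem_block.1 hb) _,
    sum_congr rfl fun c hc => blockDegree_eq_of_mk_eq Γ hact (mem_block.1 hc) _,
    sum_const, sum_const, smul_eq_mul, smul_eq_mul, card_block_eq ⟦v⟧ₙ ⟦w⟧ₙ] at hsum
  exact Nat.eq_of_mul_eq_mul_left (block_nonempty _).card_pos hsum

lemma blockDegree_eq_of_adj [IsPretransitive G V]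
    (hedge : ∀ u v x y : V, Γ.Adj u v → Γ.Adj x y →
      ∃ g : G, (g • u = x ∧ g • v = y) ∨ (g • u = y ∧ g • v = x))
    {v w v' w' : V} (h : Γ.Adj v w) (h' : Γ.Adj v' w') :
    blockDegree Γ v ⟦w⟧ₙ = blockDegree Γ v' ⟦w'⟧ₙ := by
  obtain ⟨g, ⟨rfl, rfl⟩ | ⟨rfl, rfl⟩⟩ := hedge v w v' w' h h'
  · rw [blockDegree_smul (N := N) Γ hact]
  · rw [blockDegree_smul (N := N) Γ hact, blockDegree_comm Γ hact]

lemma exists_blockDegree_eq_ite [IsPretransitive G V]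
    [DecidableRel (quotientGraph Γ N).Adj] (hconn : Γ.Connected)
    (hedge : ∀ u v x y : V, Γ.Adj u v → Γ.Adj x y →
      ∃ g : G, (g • u = x ∧ g • v = y) ∨ (g • u = y ∧ g • v = x))
    (hNintrans : ¬ IsPretransitive N V) :
    ∃ c, 0 < c ∧ ∀ v B,
      blockDegree Γ v B = if (quotientGraph Γ N).Adj ⟦v⟧ₙ B then c else 0 := by
  have : Nontrivial V := by
    by_contra h
    rw [not_nontrivial_iff_subsingleton] at h
    exact hNintrans inferInstance
  obtain ⟨v₀⟩ := hconn.nonempty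
  obtain ⟨w₀, h₀⟩ := hconn.preconnected.exists_adj_of_nontrivial v₀
  refine ⟨blockDegree Γ v₀ ⟦w₀⟧ₙ, card_pos.2 ⟨w₀, mem_filter.2 ⟨mem_block.2 rfl, h₀⟩⟩,
    fun v B => ?_⟩
  split_ifs with hvB
  · obtain ⟨-, x, y, hx, rfl, hxy⟩ := hvB
    rw [blockDegree_eq_of_mk_eq Γ hact hx.symm]
    exact blockDegree_eq_of_adj Γ hact hedge hxy h₀
  · refine card_eq_zero.2 (filter_eq_empty_iff.2 fun w hw hvw => hvB ?_)
    exact ⟨mk_ne_mk_of_adj hconn hedge hNintrans hvw |>.trans_eq (mem_block.1 hw),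
      v, w, rfl, mem_block.1 hw, hvw⟩

end Transitive

lemma sum_card_commonNeighbors_eq_sum_blockDegree_mul (B C : Quotient (orbitRel N V)) :
    ∑ b ∈ block B, ∑ c ∈ block C, #{w | Γ.Adj w b ∧ Γ.Adj w c} =
      ∑ w, blockDegree Γ w B * blockDegree Γ w C := by
  simp only [blockDegree, card_filter, sum_mul_sum]
  symm
  rw [sum_comm]
  refine sum_congr rfl fun b _ => ?_
  rw [sum_comm]
  refine sum_congr rfl fun c _ => sum_congr rfl fun w _ => ?_
  rw [ite_zero_mul_ite_zero, one_mul]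

lemma sum_card_commonNeighbors_block {n k l μ : ℕ} (hsrg : Γ.IsSRGWith n k l μ) {b : V}
    {C : Quotient (orbitRel N V)} (hbC : ⟦b⟧ₙ ≠ C) :
    ∑ c ∈ block C, #{w | Γ.Adj w b ∧ Γ.Adj w c} =
      l * blockDegree Γ b C + μ * (#(block C) - blockDegree Γ b C) := by
  have hcount : ∀ c ∈ block C, #{w | Γ.Adj w b ∧ Γ.Adj w c} = if Γ.Adj b c then l else μ := by
    intro c hc
    rw [← card_commonNeighbors_eq_card_filter]
    split_ifs with hbc
    · exact hsrg.of_adj b c hbc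
    · exact hsrg.of_not_adj (fun h => hbC (h ▸ mem_block.1 hc)) hbc
  have hsplit := card_filter_add_card_filter_not (s := block C) (p := fun c => Γ.Adj b c)
  rw [sum_congr rfl hcount, sum_ite, sum_const, sum_const, smul_eq_mul, smul_eq_mul, blockDegree,
    ← hsplit, Nat.add_sub_cancel_left, mul_comm l, mul_comm μ]

section Counting

variable [Fintype (Quotient (orbitRel N V))] [DecidableRel (quotientGraph Γ N).Adj]

lemma degree_eq_mul_degree_quotientGraph {c : ℕ}
    (hc : ∀ v B, blockDegree Γ v B = if (quotientGraph Γ N).Adj ⟦v⟧ₙ B then c else 0) (v : V) :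
    Γ.degree v = c * (quotientGraph Γ N).degree ⟦v⟧ₙ := by
  rw [degree_eq_sum_blockDegree (N := N), sum_congr rfl fun B _ => hc v B, sum_ite,
    sum_const_zero, add_zero, sum_const, smul_eq_mul, ← card_neighborFinset_eq_degree,
    neighborFinset_eq_filter, mul_comm]

lemma sum_blockDegree_mul_blockDegree {m c : ℕ}
    (hm : ∀ B : Quotient (orbitRel N V), #(block B) = m)
    (hc : ∀ v B, blockDegree Γ v B = if (quotientGraph Γ N).Adj ⟦v⟧ₙ B then c else 0)
    (B C : Quotient (orbitRel N V)) :
    ∑ w, blockDegree Γ w B * blockDegree Γ w C =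
      m * (c * c * #{D : Quotient (orbitRel N V) |
        (quotientGraph Γ N).Adj D B ∧ (quotientGraph Γ N).Adj D C}) := by
  have hD : ∀ D, ∑ w ∈ block D, blockDegree Γ w B * blockDegree Γ w C =
      m * if (quotientGraph Γ N).Adj D B ∧ (quotientGraph Γ N).Adj D C then c * c else 0 := by
    intro D
    have hw : ∀ w ∈ block D, blockDegree Γ w B * blockDegree Γ w C =
        if (quotientGraph Γ N).Adj D B ∧ (quotientGraph Γ N).Adj D C then c * c else 0 := by
      intro w hw
      rw [hc, hc, mem_block.1 hw, ite_zero_mul_ite_zero]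
    rw [sum_congr rfl hw, sum_const, hm, smul_eq_mul]
  rw [← sum_sum_block (N := N), sum_congr rfl fun D _ => hD D, ← mul_sum, sum_ite, sum_const_zero,
    add_zero, sum_const, smul_eq_mul, mul_comm (#_)]

lemma card_commonNeighbors_quotientGraph {n k l μ m c : ℕ} (hsrg : Γ.IsSRGWith n k l μ)
    (hm : ∀ B : Quotient (orbitRel N V), #(block B) = m)
    (hc : ∀ v B, blockDegree Γ v B = if (quotientGraph Γ N).Adj ⟦v⟧ₙ B then c else 0)
    {b : V} {C : Quotient (orbitRel N V)} (hbC : ⟦b⟧ₙ ≠ C) :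
    c * c * Fintype.card ((quotientGraph Γ N).commonNeighbors ⟦b⟧ₙ C) =
      l * blockDegree Γ b C + μ * (m - blockDegree Γ b C) := by
  have hm0 : 0 < m := hm C ▸ (block_nonempty C).card_pos
  refine Nat.eq_of_mul_eq_mul_left hm0 ?_
  have hb : ∀ b' ∈ block ⟦b⟧ₙ, blockDegree Γ b' C = blockDegree Γ b C := fun b' hb' => by
    rw [hc, hc, mem_block.1 hb']
  calc m * (c * c * Fintype.card ((quotientGraph Γ N).commonNeighbors ⟦b⟧ₙ C))
      = ∑ w, blockDegree Γ w ⟦b⟧ₙ * blockDegree Γ w C := by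
        rw [card_commonNeighbors_eq_card_filter, sum_blockDegree_mul_blockDegree Γ hm hc]
    _ = ∑ b' ∈ block ⟦b⟧ₙ, (l * blockDegree Γ b' C + μ * (m - blockDegree Γ b' C)) := by
        rw [← sum_card_commonNeighbors_eq_sum_blockDegree_mul]
        refine sum_congr rfl fun b' hb' => ?_
        rw [sum_card_commonNeighbors_block Γ hsrg ((mem_block.1 hb').trans_ne hbC), hm]
    _ = m * (l * blockDegree Γ b C + μ * (m - blockDegree Γ b C)) := by
        rw [sum_congr rfl fun b' hb' => by rw [hb b' hb'], sum_const, hm, smul_eq_mul]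

theorem isSRGWith_quotientGraph {n k l μ m c : ℕ} (hsrg : Γ.IsSRGWith n k l μ)
    (hm : ∀ B : Quotient (orbitRel N V), #(block B) = m) (hc0 : 0 < c)
    (hc : ∀ v B, blockDegree Γ v B = if (quotientGraph Γ N).Adj ⟦v⟧ₙ B then c else 0) :
    (quotientGraph Γ N).IsSRGWith (Fintype.card (Quotient (orbitRel N V))) (k / c)
      ((l * c + μ * (m - c)) / (c * c)) (μ * m / (c * c)) where
  card := rfl
  regular X := by
    induction X using Quotient.inductionOn with | h x => ?_
    rw [← hsrg.regular x, degree_eq_mul_degree_quotientGraph Γ hc, Nat.mul_div_cancel_left _ hc0]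
  of_adj X Y hXY := by
    induction X using Quotient.inductionOn with | h x => ?_
    have := card_commonNeighbors_quotientGraph Γ hsrg hm hc hXY.ne
    rw [hc, if_pos hXY] at this
    rw [← this, Nat.mul_div_cancel_left _ (Nat.mul_pos hc0 hc0)]
  of_not_adj X Y hne hXY := by
    induction X using Quotient.inductionOn with | h x => ?_
    have := card_commonNeighbors_quotientGraph Γ hsrg hm hc hne
    rw [hc, if_neg hXY, mul_zero, zero_add, Nat.sub_zero] at this
    rw [← this, Nat.mul_div_cancel_left _ (Nat.mul_pos hc0 hc0)]

end Counting

end NormalQuotient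

theorem stmt8_general {V G : Type*} [Fintype V] [Group G] [MulAction G V]
    (Γ : SimpleGraph V) [DecidableRel Γ.Adj] (n k l μ : ℕ)
    (hsrg : Γ.IsSRGWith n k l μ) (hconn : Γ.Connected)
    (hact : ∀ (g : G) (u v : V), Γ.Adj (g • u) (g • v) ↔ Γ.Adj u v)
    (hvtrans : MulAction.IsPretransitive G V)
    (hedge : ∀ u v x y : V, Γ.Adj u v → Γ.Adj x y →
      ∃ g : G, (g • u = x ∧ g • v = y) ∨ (g • u = y ∧ g • v = x))
    (N : Subgroup G) (hN : N.Normal)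
    (hNintrans : ¬ MulAction.IsPretransitive N V)
    [Fintype (Quotient (orbitRel N V))]
    [DecidableRel (quotientGraph Γ N).Adj] :
    (quotientGraph Γ N).Connected ∧
    -- vertex-transitivity of the induced `G`-action on the quotient
    (∀ X Y : Quotient (orbitRel N V), ∃ g : G, ∀ x : V,
      Quotient.mk (orbitRel N V) x = X → Quotient.mk (orbitRel N V) (g • x) = Y) ∧
    -- edge-transitivity of the induced `G`-action on the quotient
    (∀ X Y X' Y' : Quotient (orbitRel N V),
      (quotientGraph Γ N).Adj X Y → (quotientGraph Γ N).Adj X' Y' →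
      ∃ g : G, ∀ x y : V, Quotient.mk (orbitRel N V) x = X →
        Quotient.mk (orbitRel N V) y = Y →
        ((Quotient.mk (orbitRel N V) (g • x) = X' ∧
          Quotient.mk (orbitRel N V) (g • y) = Y') ∨
         (Quotient.mk (orbitRel N V) (g • x) = Y' ∧
          Quotient.mk (orbitRel N V) (g • y) = X'))) ∧
    -- strong regularity of the quotient
    (∃ k' l' μ' : ℕ, (quotientGraph Γ N).IsSRGWith
      (Fintype.card (Quotient (orbitRel N V))) k' l' μ') := by
  obtain ⟨c, hc0, hc⟩ := exists_blockDegree_eq_ite Γ hact hconn hedge hNintrans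
  obtain ⟨v⟩ := hconn.nonempty
  exact ⟨quotientGraph_connected hconn, exists_smul_mk_eq,
    fun X Y X' Y' => exists_smul_mk_eq_of_adj hedge, _, _, _,
    isSRGWith_quotientGraph Γ hsrg (fun B => card_block_eq B ⟦v⟧) hc0 hc⟩

/-- Every normal quotient of a connected vertex- and edge-transitive strongly regular
graph is itself a connected vertex- and edge-transitive strongly regular graph. -/
theorem stmt8 {V G : Type*} [Fintype V] [Group G] [MulAction G V]
    (Γ : SimpleGraph V) [DecidableRel Γ.Adj] (n k l μ : ℕ)
    (hsrg : Γ.IsSRGWith n k l μ) (hconn : Γ.Connected)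
    (hact : ∀ (g : G) (u v : V), Γ.Adj (g • u) (g • v) ↔ Γ.Adj u v)
    (hvtrans : MulAction.IsPretransitive G V)
    (hedge : ∀ u v x y : V, Γ.Adj u v → Γ.Adj x y →
      ∃ g : G, (g • u = x ∧ g • v = y) ∨ (g • u = y ∧ g • v = x))
    (N : Subgroup G) (hN : N.Normal) (hNbot : N ≠ ⊥)
    (hNintrans : ¬ MulAction.IsPretransitive N V)
    [Fintype (Quotient (orbitRel N V))]
    [DecidableRel (quotientGraph Γ N).Adj] :
    (quotientGraph Γ N).Connected ∧
    -- vertex-transitivity of the induced `G`-action on the quotient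
    (∀ X Y : Quotient (orbitRel N V), ∃ g : G, ∀ x : V,
      Quotient.mk (orbitRel N V) x = X → Quotient.mk (orbitRel N V) (g • x) = Y) ∧
    -- edge-transitivity of the induced `G`-action on the quotient
    (∀ X Y X' Y' : Quotient (orbitRel N V),
      (quotientGraph Γ N).Adj X Y → (quotientGraph Γ N).Adj X' Y' →
      ∃ g : G, ∀ x y : V, Quotient.mk (orbitRel N V) x = X →
        Quotient.mk (orbitRel N V) y = Y →
        ((Quotient.mk (orbitRel N V) (g • x) = X' ∧
          Quotient.mk (orbitRel N V) (g • y) = Y') ∨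
         (Quotient.mk (orbitRel N V) (g • x) = Y' ∧
          Quotient.mk (orbitRel N V) (g • y) = X'))) ∧
    -- strong regularity of the quotient
    (∃ k' l' μ' : ℕ, (quotientGraph Γ N).IsSRGWith
      (Fintype.card (Quotient (orbitRel N V))) k' l' μ') :=
  stmt8_general Γ n k l μ hsrg hconn hact hvtrans hedge N hN hNintrans
end

section
/- Let Γ be a connected, non-complete strongly regular graph with parameters (n,k,λ,μ), which is an ℓ-multicover of a complete quotient K_{m+1} with orbit/fibre size b (so k = ℓm, all fibres are independent sets of size b, and each vertex has exactly ℓ neighbours in every other fibre). Then (b−1)μ = ℓm(ℓ−1); in particular ℓ ≥ 2. -/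
/-!
Fix a vertex `v` and double count the edges between the neighbourhood of `v` and the other
`b - 1` vertices of the fibre of `v`. A neighbour `u` of `v` lies in another fibre, so it has
`ℓ` neighbours in the fibre of `v`, one of which is `v`: this gives `k (ℓ - 1)` edges. A vertex
`w ≠ v` of that fibre is not adjacent to `v`, so it has `μ` neighbours in the neighbourhood of
`v`: this gives `(b - 1) μ` edges. Finally `μ > 0` because the graph is connected, so `ℓ ≥ 2`.
-/

namespace SimpleGraph

variable {V : Type*} [Fintype V] {G : SimpleGraph V} [DecidableRel G.Adj] {n k l μ : ℕ}

theorem IsSRGWith.adj_of_adj_of_adj_of_mu_eq_zero (h : G.IsSRGWith n k l 0) {x y z : V}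
    (hxy : G.Adj x y) (hyz : G.Adj y z) (hxz : x ≠ z) : G.Adj x z := by
  by_contra hnadj
  have hy : y ∈ G.commonNeighbors x z := ⟨hxy, hyz.symm⟩
  have hcard := h.of_not_adj hxz hnadj
  rw [Fintype.card_eq_zero_iff] at hcard
  exact hcard.false ⟨y, hy⟩

theorem IsSRGWith.adj_of_walk_of_mu_eq_zero (h : G.IsSRGWith n k l 0) {x y : V}
    (p : G.Walk x y) : x = y ∨ G.Adj x y := by
  induction p with
  | nil => exact Or.inl rfl
  | @cons x c y hxc _ ih =>
    rcases ih with rfl | hcy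
    · exact Or.inr hxc
    · by_cases hxy : x = y
      · exact Or.inl hxy
      · exact Or.inr (h.adj_of_adj_of_adj_of_mu_eq_zero hxc hcy hxy)

theorem IsSRGWith.mu_pos (h : G.IsSRGWith n k l μ) (hconn : G.Connected) {v w : V}
    (hne : v ≠ w) (hnadj : ¬ G.Adj v w) : 0 < μ := by
  rw [Nat.pos_iff_ne_zero]
  rintro rfl
  obtain ⟨p⟩ := hconn.preconnected v w
  exact (h.adj_of_walk_of_mu_eq_zero p).elim hne hnadj

theorem IsSRGWith.degree_mul_eq_mul_mu_of_fibres {ι : Type*} {ℓ : ℕ}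
    (h : G.IsSRGWith n k l μ) (f : V → ι) (hind : ∀ u v, G.Adj u v → f u ≠ f v)
    (hmc : ∀ v i, f v ≠ i → {w | G.Adj v w ∧ f w = i}.ncard = ℓ) (v : V) :
    k * (ℓ - 1) = ({w | f w = f v}.ncard - 1) * μ := by
  classical
  set F : Finset V := {w | f w = f v}
  have hF : F.card = {w | f w = f v}.ncard := by
    rw [Set.ncard_eq_toFinset_card', Set.toFinset_ofPred]
  have hvF : v ∈ F := by simp [F]
  have above :
      ∀ u ∈ G.neighborFinset v, ((F.erase v).bipartiteAbove G.Adj u).card = ℓ - 1 := by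
    intro u hu
    have hvu : G.Adj v u := (G.mem_neighborFinset v u).mp hu
    have hcount := hmc u (f v) (hind v u hvu).symm
    rw [Set.ncard_eq_toFinset_card', Set.toFinset_ofPred] at hcount
    have hv : v ∈ ({w | G.Adj u w ∧ f w = f v} : Finset V) := by simp [hvu.symm]
    have hset : (F.erase v).bipartiteAbove G.Adj u =
        ({w | G.Adj u w ∧ f w = f v} : Finset V).erase v := by
      ext w
      simp only [Finset.mem_bipartiteAbove, Finset.mem_erase, Finset.mem_filter,
        Finset.mem_univ, true_and, F]
      tauto
    rw [hset, Finset.card_erase_of_mem hv, hcount]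
  have below : ∀ w ∈ F.erase v, ((G.neighborFinset v).bipartiteBelow G.Adj w).card = μ := by
    intro w hw
    obtain ⟨hwv, hwF⟩ := Finset.mem_erase.mp hw
    have hfw : f w = f v := by simpa [F] using hwF
    have hnadj : ¬ G.Adj v w := fun hvw => hind v w hvw hfw.symm
    have hset :
        (G.neighborFinset v).bipartiteBelow G.Adj w = (G.commonNeighbors v w).toFinset := by
      ext u
      simp [mem_commonNeighbors, adj_comm]
    rw [hset, Set.toFinset_card, h.of_not_adj (Ne.symm hwv) hnadj]
  have := Finset.card_mul_eq_card_mul G.Adj above below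
  rwa [card_neighborFinset_eq_degree, h.regular v, Finset.card_erase_of_mem hvF, hF] at this

end SimpleGraph

theorem stmt10_general {V : Type*} [Fintype V] (Γ : SimpleGraph V) [DecidableRel Γ.Adj]
    (n k l μ m b ℓ : ℕ)
    (hsrg : Γ.IsSRGWith n k l μ) (hconn : Γ.Connected)
    (f : V → Fin (m + 1))
    (hsize : ∀ i : Fin (m + 1), ({v : V | f v = i}).ncard = b)
    (hind : ∀ u v : V, Γ.Adj u v → f u ≠ f v)
    (hmc : ∀ (v : V) (i : Fin (m + 1)), f v ≠ i →
      ({w : V | Γ.Adj v w ∧ f w = i}).ncard = ℓ)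
    (hb : 2 ≤ b)
    (hk : k = ℓ * m) :
    ((b : ℤ) - 1) * μ = (ℓ : ℤ) * m * ((ℓ : ℤ) - 1) ∧ 2 ≤ ℓ := by
  obtain ⟨v⟩ := hconn.nonempty
  have hcount := hsrg.degree_mul_eq_mul_mu_of_fibres f hind hmc v
  rw [hsize, hk] at hcount
  obtain ⟨w, hw, hwv⟩ := Set.exists_ne_of_one_lt_ncard (by rw [hsize (f v)]; omega) v
  have hμ : 0 < μ := hsrg.mu_pos hconn (Ne.symm hwv) fun hvw => hind v w hvw hw.symm
  have hℓ : 2 ≤ ℓ := by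
    by_contra! hℓ
    rw [Nat.sub_eq_zero_of_le (by omega), mul_zero] at hcount
    exact (Nat.mul_pos (by omega) hμ).ne' hcount.symm
  refine ⟨?_, hℓ⟩
  zify [show 1 ≤ b by omega, show 1 ≤ ℓ by omega] at hcount
  linarith

/-- If a connected non-complete strongly regular graph with parameters `(n,k,λ,μ)` is an
`ℓ`-multicover of the complete graph `K_{m+1}` with fibres of size `b` (so `k = ℓm`,
`n = (m+1)b`), then `(b-1)μ = ℓm(ℓ-1)`; in particular `ℓ ≥ 2`. -/
theorem stmt10 {V : Type*} [Fintype V] (Γ : SimpleGraph V) [DecidableRel Γ.Adj]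
    (n k l μ m b ℓ : ℕ)
    (hsrg : Γ.IsSRGWith n k l μ) (hconn : Γ.Connected)
    (hnc : ∃ u v : V, u ≠ v ∧ ¬ Γ.Adj u v)
    (f : V → Fin (m + 1))
    (hsize : ∀ i : Fin (m + 1), ({v : V | f v = i}).ncard = b)
    (hind : ∀ u v : V, Γ.Adj u v → f u ≠ f v)
    (hmc : ∀ (v : V) (i : Fin (m + 1)), f v ≠ i →
      ({w : V | Γ.Adj v w ∧ f w = i}).ncard = ℓ)
    (hb : 2 ≤ b) (hm : 1 ≤ m) (hl : 1 ≤ ℓ)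
    (hk : k = ℓ * m) (hn : n = (m + 1) * b) :
    ((b : ℤ) - 1) * μ = (ℓ : ℤ) * m * ((ℓ : ℤ) - 1) ∧ 2 ≤ ℓ :=
  stmt10_general Γ n k l μ m b ℓ hsrg hconn f hsize hind hmc hb hk
end

section
/- Under the hypotheses of an ℓ-multicover of K_{m+1}: (b−ℓ)μ = ℓ(ℓm − ℓ − λ). -/
/-!
Fix a vertex `v` and a fibre `F` not containing it, and count the paths `v - u - w` with `w ∈ F`.
By endpoint `w`: the `ℓ` neighbours of `v` in `F` contribute `λ` each and the other `b - ℓ`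
vertices of `F` contribute `μ` each. By middle vertex `u`: a neighbour of `v` inside `F` has no
neighbour in the independent set `F`, and each of the other `ℓm - ℓ` neighbours has exactly `ℓ`.
Hence `ℓλ + (b - ℓ)μ = (ℓm - ℓ)ℓ`.
-/

open Finset

namespace SimpleGraph

variable {V : Type*} [Fintype V] {G : SimpleGraph V} [DecidableRel G.Adj]

theorem card_filter_adj_neighborFinset (v w : V) :
    #{u ∈ G.neighborFinset v | G.Adj w u} = Fintype.card (G.commonNeighbors v w) := by
  rw [← Set.toFinset_card]
  congr 1
  ext u
  simp [mem_commonNeighbors, G.adj_comm w u]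

theorem IsSRGWith.sum_card_filter_adj_neighborFinset {n k l μ : ℕ} (hG : G.IsSRGWith n k l μ)
    {v : V} {s : Finset V} (hv : v ∉ s) :
    ∑ w ∈ s, #{u ∈ G.neighborFinset v | G.Adj w u} =
      #{w ∈ s | G.Adj v w} * l + #{w ∈ s | ¬G.Adj v w} * μ := by
  rw [← sum_filter_add_sum_filter_not s (G.Adj v), card_eq_sum_ones, card_eq_sum_ones,
    sum_mul, sum_mul]
  congr 1 <;> refine sum_congr rfl fun w hw => ?_ <;> rw [mem_filter] at hw <;>
    rw [one_mul, card_filter_adj_neighborFinset]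
  · exact hG.of_adj v w hw.2
  · exact hG.of_not_adj (ne_of_mem_of_not_mem hw.1 hv).symm hw.2

variable {ι : Type*} [DecidableEq ι] {f : V → ι} {ℓ : ℕ}

theorem card_fiber_filter_adj (hind : ∀ u w, G.Adj u w → f u ≠ f w)
    (hmc : ∀ u i, f u ≠ i → #{w | G.Adj u w ∧ f w = i} = ℓ) (u : V) (i : ι) :
    #{w | f w = i ∧ G.Adj w u} = if f u = i then 0 else ℓ := by
  split_ifs with hu
  · refine card_eq_zero.2 (filter_eq_empty_iff.2 fun w _ ⟨hw, hwu⟩ => hind w u hwu ?_)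
    rw [hw, hu]
  · rw [← hmc u i hu]
    simp_rw [G.adj_comm _ u, and_comm]

theorem sum_card_fiber_filter_adj (hind : ∀ u w, G.Adj u w → f u ≠ f w)
    (hmc : ∀ u i, f u ≠ i → #{w | G.Adj u w ∧ f w = i} = ℓ) (s : Finset V) (i : ι) :
    ∑ u ∈ s, #{w | f w = i ∧ G.Adj w u} = #{u ∈ s | f u ≠ i} * ℓ := by
  simp_rw [card_fiber_filter_adj hind hmc, card_eq_sum_ones, sum_mul, one_mul, sum_filter, ite_not]

theorem IsSRGWith.card_adj_mul_add_card_not_adj_mul {n k l μ : ℕ} (hG : G.IsSRGWith n k l μ)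
    (hind : ∀ u w, G.Adj u w → f u ≠ f w)
    (hmc : ∀ u i, f u ≠ i → #{w | G.Adj u w ∧ f w = i} = ℓ) {v : V} {i : ι} (hi : f v ≠ i) :
    #{w ∈ {w | f w = i} | G.Adj v w} * l + #{w ∈ {w | f w = i} | ¬G.Adj v w} * μ =
      #{u ∈ G.neighborFinset v | f u ≠ i} * ℓ := by
  rw [← hG.sum_card_filter_adj_neighborFinset (by simpa using hi),
    ← sum_card_fiber_filter_adj hind hmc]
  convert sum_card_bipartiteAbove_eq_sum_card_bipartiteBelow (fun w u => G.Adj w u) using 3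
  · rfl
  · rw [bipartiteBelow, filter_filter]

end SimpleGraph

theorem stmt11_general {V : Type*} [Fintype V] (Γ : SimpleGraph V) [DecidableRel Γ.Adj]
    (n k l μ m b ℓ : ℕ)
    (hsrg : Γ.IsSRGWith n k l μ) (hconn : Γ.Connected)
    (f : V → Fin (m + 1))
    (hsize : ∀ i : Fin (m + 1), ({v : V | f v = i}).ncard = b)
    (hind : ∀ u v : V, Γ.Adj u v → f u ≠ f v)
    (hmc : ∀ (v : V) (i : Fin (m + 1)), f v ≠ i →
      ({w : V | Γ.Adj v w ∧ f w = i}).ncard = ℓ)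
    (hm : 2 ≤ m)
    (hk : k = ℓ * m) :
    ((b : ℤ) - ℓ) * μ = (ℓ : ℤ) * ((ℓ : ℤ) * m - ℓ - l) := by
  obtain ⟨v⟩ := hconn.nonempty
  have : Nontrivial (Fin (m + 1)) := Fin.nontrivial_iff_two_le.2 (by omega)
  obtain ⟨i, hi⟩ : ∃ i, f v ≠ i := (exists_ne (f v)).imp fun _ => Ne.symm
  have hmc' : ∀ u j, f u ≠ j → #{w | Γ.Adj u w ∧ f w = j} = ℓ := fun u j h => by
    simpa [Set.ncard_eq_toFinset_card'] using hmc u j h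
  have hfiber : #{w | f w = i} = b := by simpa [Set.ncard_eq_toFinset_card'] using hsize i
  have hfiber_adj : #{w ∈ {w | f w = i} | Γ.Adj v w} = ℓ := by
    rw [filter_filter, ← hmc' v i hi]; simp_rw [and_comm]
  have hnbr_fiber : #{u ∈ Γ.neighborFinset v | f u = i} = ℓ := by
    rw [SimpleGraph.neighborFinset_eq_filter, filter_filter, hmc' v i hi]
  have hsplit_fiber : ℓ + #{w ∈ {w | f w = i} | ¬Γ.Adj v w} = b := by
    rw [← hfiber_adj, card_filter_add_card_filter_not, hfiber]
  have hsplit_nbr : ℓ + #{u ∈ Γ.neighborFinset v | f u ≠ i} = ℓ * m := by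
    have := card_filter_add_card_filter_not (s := Γ.neighborFinset v) (f · = i)
    rwa [hnbr_fiber, Γ.card_neighborFinset_eq_degree, hsrg.regular v, hk] at this
  have key := hsrg.card_adj_mul_add_card_not_adj_mul hind hmc' hi
  rw [hfiber_adj] at key
  zify at hsplit_fiber hsplit_nbr key
  linear_combination key - μ * hsplit_fiber + ℓ * hsplit_nbr

/-- Under the hypotheses of an `ℓ`-multicover of `K_{m+1}`: `(b-ℓ)μ = ℓ(ℓm - ℓ - λ)`. -/
theorem stmt11 {V : Type*} [Fintype V] (Γ : SimpleGraph V) [DecidableRel Γ.Adj]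
    (n k l μ m b ℓ : ℕ)
    (hsrg : Γ.IsSRGWith n k l μ) (hconn : Γ.Connected)
    (hnc : ∃ u v : V, u ≠ v ∧ ¬ Γ.Adj u v)
    (f : V → Fin (m + 1))
    (hsize : ∀ i : Fin (m + 1), ({v : V | f v = i}).ncard = b)
    (hind : ∀ u v : V, Γ.Adj u v → f u ≠ f v)
    (hmc : ∀ (v : V) (i : Fin (m + 1)), f v ≠ i →
      ({w : V | Γ.Adj v w ∧ f w = i}).ncard = ℓ)
    (hb : 2 ≤ b) (hm : 2 ≤ m) (hl : 1 ≤ ℓ)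
    (hk : k = ℓ * m) (hn : n = (m + 1) * b) :
    ((b : ℤ) - ℓ) * μ = (ℓ : ℤ) * ((ℓ : ℤ) * m - ℓ - l) :=
  stmt11_general Γ n k l μ m b ℓ hsrg hconn f hsize hind hmc hm hk
end

section
/- Under the hypotheses of an ℓ-multicover of K_{m+1}: μ(ℓ−1) = ℓ(ℓ+λ−m), and consequently ℓ divides μ. -/
/-- Under the hypotheses of an `ℓ`-multicover of `K_{m+1}`:
`μ(ℓ-1) = ℓ(ℓ+λ-m)`, and consequently `ℓ ∣ μ`. -/
theorem stmt12 {V : Type*} [Fintype V] (Γ : SimpleGraph V) [DecidableRel Γ.Adj]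
    (n k l μ m b ℓ : ℕ)
    (hsrg : Γ.IsSRGWith n k l μ) (hconn : Γ.Connected)
    (hnc : ∃ u v : V, u ≠ v ∧ ¬ Γ.Adj u v)
    (f : V → Fin (m + 1))
    (hsize : ∀ i : Fin (m + 1), ({v : V | f v = i}).ncard = b)
    (hind : ∀ u v : V, Γ.Adj u v → f u ≠ f v)
    (hmc : ∀ (v : V) (i : Fin (m + 1)), f v ≠ i →
      ({w : V | Γ.Adj v w ∧ f w = i}).ncard = ℓ)
    (hb : 2 ≤ b) (hm : 2 ≤ m) (hl : 2 ≤ ℓ)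
    (hk : k = ℓ * m) (hn : n = (m + 1) * b) :
    (μ : ℤ) * ((ℓ : ℤ) - 1) = (ℓ : ℤ) * ((ℓ : ℤ) + l - m) ∧ ℓ ∣ μ := by
  classical
  obtain ⟨u0, v0, hne0, hnadj0⟩ := hnc
  -- helper: ncard of a set as a filter card
  have ncardf : ∀ (p : V → Prop) [DecidablePred p],
      ({x | p x} : Set V).ncard = (Finset.univ.filter p).card := by
    intro p hp
    rw [Set.ncard_eq_toFinset_card']
    congr 1
    ext x
    simp
  -- there is an edge at u0
  obtain ⟨i0, hi0⟩ := Fintype.exists_ne_of_one_lt_card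
    (by simp only [Fintype.card_fin]; omega) (f u0)
  have hS : ({w : V | Γ.Adj u0 w ∧ f w = i0}).ncard = ℓ := hmc u0 i0 (Ne.symm hi0)
  have hSne : ({w : V | Γ.Adj u0 w ∧ f w = i0}).Nonempty := by
    apply Set.nonempty_of_ncard_ne_zero
    omega
  obtain ⟨w0, hw0, _⟩ := hSne
  -- l < k
  have hlk : l < k := by
    have h1 : Fintype.card (Γ.commonNeighbors u0 w0) < Γ.degree u0 := by
      rw [← Set.toFinset_card]
      apply Finset.card_lt_card
      rw [Finset.ssubset_iff_of_subset]
      · exact ⟨w0, by simp [hw0], by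
          simp [SimpleGraph.mem_commonNeighbors]⟩
      · intro x hx
        simp only [Set.mem_toFinset, SimpleGraph.mem_commonNeighbors] at hx
        simpa using hx.1
    rwa [hsrg.of_adj u0 w0 hw0, hsrg.regular u0] at h1
  -- k < n
  have hkn : k < n := by
    have := Γ.degree_lt_card_verts u0
    rwa [hsrg.regular u0, hsrg.card] at this
  -- the key counting identity: (b-1) * μ = k * (ℓ - 1)
  have key : (b - 1) * μ = k * (ℓ - 1) := by
    set v := u0 with hv
    set A : Finset V := Finset.univ.filter (fun u => f u = f v ∧ u ≠ v) with hA
    have hAcard : A.card = b - 1 := by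
      have h1 : (Finset.univ.filter (fun u => f u = f v)).card = b := by
        rw [← ncardf]; exact hsize (f v)
      have h2 : A = (Finset.univ.filter (fun u => f u = f v)).erase v := by
        ext u
        simp [hA, and_comm]
      rw [h2, Finset.card_erase_of_mem (by simp), h1]
    -- each term is μ
    have hterm : ∀ u ∈ A, Fintype.card (Γ.commonNeighbors v u) = μ := by
      intro u hu
      simp only [hA, Finset.mem_filter] at hu
      exact hsrg.of_not_adj (Ne.symm hu.2.2)
        (fun h => hind v u h (hu.2.1).symm)
    have lhs : ∑ u ∈ A, Fintype.card (Γ.commonNeighbors v u) = (b - 1) * μ := by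
      rw [Finset.sum_congr rfl hterm, Finset.sum_const, smul_eq_mul, hAcard]
    -- rewrite each common neighbors card as a filter card
    have hcn : ∀ u, Fintype.card (Γ.commonNeighbors v u)
        = ((Γ.neighborFinset v).filter (fun w => Γ.Adj w u)).card := by
      intro u
      rw [← Set.toFinset_card]
      congr 1
      ext x
      simp [SimpleGraph.mem_commonNeighbors, SimpleGraph.adj_comm]
    -- double counting swap
    have swap : ∑ u ∈ A, ((Γ.neighborFinset v).filter (fun w => Γ.Adj w u)).card
        = ∑ w ∈ Γ.neighborFinset v, (A.filter (fun u => Γ.Adj w u)).card := by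
      simp only [Finset.card_filter]
      rw [Finset.sum_comm]
    -- each inner count is ℓ - 1
    have hinner : ∀ w ∈ Γ.neighborFinset v,
        (A.filter (fun u => Γ.Adj w u)).card = ℓ - 1 := by
      intro w hw
      rw [SimpleGraph.mem_neighborFinset] at hw
      have hfw : f w ≠ f v := fun h => hind v w hw h.symm
      have hB : (Finset.univ.filter (fun u => Γ.Adj w u ∧ f u = f v)).card = ℓ := by
        rw [← ncardf]; exact hmc w (f v) hfw
      have hEq : A.filter (fun u => Γ.Adj w u)
          = (Finset.univ.filter (fun u => Γ.Adj w u ∧ f u = f v)).erase v := by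
        ext u
        simp only [hA, Finset.mem_filter, Finset.mem_erase, Finset.mem_univ, true_and]
        tauto
      rw [hEq, Finset.card_erase_of_mem (by simp [hw.symm]), hB]
    calc (b - 1) * μ = ∑ u ∈ A, Fintype.card (Γ.commonNeighbors v u) := lhs.symm
      _ = ∑ u ∈ A, ((Γ.neighborFinset v).filter (fun w => Γ.Adj w u)).card := by
          exact Finset.sum_congr rfl (fun u _ => hcn u)
      _ = ∑ w ∈ Γ.neighborFinset v, (A.filter (fun u => Γ.Adj w u)).card := swap
      _ = k * (ℓ - 1) := by
          rw [Finset.sum_congr rfl hinner, Finset.sum_const, smul_eq_mul,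
            SimpleGraph.card_neighborFinset_eq_degree, hsrg.regular v]
  -- the standard SRG parameter identity
  have hpe : k * (k - l - 1) = (n - k - 1) * μ := SimpleGraph.IsSRGWith.param_eq Γ hsrg (by omega : 0 < n)
  -- cast everything to ℤ
  have key' : ((b : ℤ) - 1) * μ = (ℓ : ℤ) * m * ((ℓ : ℤ) - 1) := by
    have : ((b - 1 : ℕ) : ℤ) * μ = ((k : ℕ) : ℤ) * ((ℓ - 1 : ℕ) : ℤ) := by
      exact_mod_cast congrArg (fun x : ℕ => (x : ℤ)) key
    push_cast [Nat.cast_sub (by omega : 1 ≤ b), Nat.cast_sub (by omega : 1 ≤ ℓ)] at this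
    rw [hk] at this
    push_cast at this
    linarith
  have hpe' : (ℓ : ℤ) * m * ((ℓ : ℤ) * m - l - 1) = (((m : ℤ) + 1) * b - (ℓ : ℤ) * m - 1) * μ := by
    have : ((k : ℕ) : ℤ) * ((k - l - 1 : ℕ) : ℤ) = ((n - k - 1 : ℕ) : ℤ) * μ := by
      exact_mod_cast congrArg (fun x : ℕ => (x : ℤ)) hpe
    rw [Nat.cast_sub (by omega : 1 ≤ k - l), Nat.cast_sub (by omega : l ≤ k),
      Nat.cast_sub (by omega : 1 ≤ n - k), Nat.cast_sub (by omega : k ≤ n)] at this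
    rw [hk, hn] at this
    push_cast at this
    linarith
  have main : (μ : ℤ) * ((ℓ : ℤ) - 1) = (ℓ : ℤ) * ((ℓ : ℤ) + l - m) := by
    have hm0 : (m : ℤ) ≠ 0 := by exact_mod_cast (by omega : m ≠ 0)
    have h3 : (m : ℤ) * ((μ : ℤ) * ((ℓ : ℤ) - 1)) = (m : ℤ) * ((ℓ : ℤ) * ((ℓ : ℤ) + l - m)) := by
      linear_combination ((m : ℤ) + 1) * key' + hpe'
    exact mul_left_cancel₀ hm0 h3
  refine ⟨main, ?_⟩
  have hdvd : (ℓ : ℤ) ∣ (μ : ℤ) * ((ℓ : ℤ) - 1) := ⟨(ℓ : ℤ) + l - m, main⟩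
  have hcop : IsCoprime ((ℓ : ℤ)) ((ℓ : ℤ) - 1) := ⟨1, -1, by ring⟩
  have : (ℓ : ℤ) ∣ (μ : ℤ) := hcop.dvd_of_dvd_mul_right hdvd
  exact_mod_cast this
end

section
/- Under the hypotheses of an ℓ-multicover of K_{m+1}: if Γ is not the complete multipartite graph K_{(m+1)[b]}, then μ ≤ (m−1)ℓ. -/
namespace SimpleGraph

variable {V ι : Type*} (G : SimpleGraph V) (f : V → ι)

lemma commonNeighbors_subset_biUnion_adj_fibre [Fintype ι] [DecidableEq ι]
    (hind : ∀ u v, G.Adj u v → f u ≠ f v) (u v : V) :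
    G.commonNeighbors u v ⊆ ⋃ i ∈ ({f u, f v}ᶜ : Finset ι), {w | G.Adj u w ∧ f w = i} := by
  intro w ⟨huw, hvw⟩
  simp only [Set.mem_iUnion, Set.mem_ofPred_eq, Finset.mem_compl, Finset.mem_insert,
    Finset.mem_singleton, not_or]
  exact ⟨f w, ⟨(hind u w huw).symm, (hind v w hvw).symm⟩, huw, rfl⟩

lemma ncard_commonNeighbors_le [Finite V] [Fintype ι] [DecidableEq ι]
    (hind : ∀ u v, G.Adj u v → f u ≠ f v) {ℓ : ℕ} {u v : V}
    (hmc : ∀ i, f u ≠ i → {w | G.Adj u w ∧ f w = i}.ncard ≤ ℓ) (huv : f u ≠ f v) :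
    (G.commonNeighbors u v).ncard ≤ (Fintype.card ι - 2) * ℓ := by
  have hcard : ({f u, f v}ᶜ : Finset ι).card = Fintype.card ι - 2 := by
    rw [Finset.card_compl, Finset.card_pair huv]
  calc (G.commonNeighbors u v).ncard
      ≤ (⋃ i ∈ ({f u, f v}ᶜ : Finset ι), {w | G.Adj u w ∧ f w = i}).ncard :=
        Set.ncard_le_ncard (G.commonNeighbors_subset_biUnion_adj_fibre f hind u v)
    _ ≤ ∑ i ∈ ({f u, f v}ᶜ : Finset ι), {w | G.Adj u w ∧ f w = i}.ncard :=
        Finset.set_ncard_biUnion_le _ _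
    _ ≤ ∑ _i ∈ ({f u, f v}ᶜ : Finset ι), ℓ := by
        refine Finset.sum_le_sum fun i hi => hmc i ?_
        simp only [Finset.mem_compl, Finset.mem_insert, not_or] at hi
        exact Ne.symm hi.1
    _ = (Fintype.card ι - 2) * ℓ := by rw [Finset.sum_const, hcard, smul_eq_mul]

end SimpleGraph

theorem stmt13_general {V : Type*} [Fintype V] (Γ : SimpleGraph V) [DecidableRel Γ.Adj]
    (n k l μ m ℓ : ℕ)
    (hsrg : Γ.IsSRGWith n k l μ)
    (f : V → Fin (m + 1))
    (hind : ∀ u v : V, Γ.Adj u v → f u ≠ f v)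
    (hmc : ∀ (v : V) (i : Fin (m + 1)), f v ≠ i →
      ({w : V | Γ.Adj v w ∧ f w = i}).ncard = ℓ)
    (hnotmp : ∃ u v : V, f u ≠ f v ∧ ¬ Γ.Adj u v) :
    μ ≤ (m - 1) * ℓ := by
  obtain ⟨u, v, hfuv, hadj⟩ := hnotmp
  have huv : u ≠ v := fun h => hfuv (congrArg f h)
  have hμ : μ = (Γ.commonNeighbors u v).ncard := by
    rw [← hsrg.of_not_adj huv hadj, Set.ncard_eq_toFinset_card', Set.toFinset_card]
  have hbound := Γ.ncard_commonNeighbors_le f hind (fun i hi => (hmc u i hi).le) hfuv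
  rwa [Fintype.card_fin, Nat.add_sub_add_right, ← hμ] at hbound

/-- Under the hypotheses of an `ℓ`-multicover of `K_{m+1}`: if `Γ` is not the complete
multipartite graph `K_{(m+1)[b]}`, then `μ ≤ (m-1)ℓ`. -/
theorem stmt13 {V : Type*} [Fintype V] (Γ : SimpleGraph V) [DecidableRel Γ.Adj]
    (n k l μ m b ℓ : ℕ)
    (hsrg : Γ.IsSRGWith n k l μ) (hconn : Γ.Connected)
    (hnc : ∃ u v : V, u ≠ v ∧ ¬ Γ.Adj u v)
    (f : V → Fin (m + 1))
    (hsize : ∀ i : Fin (m + 1), ({v : V | f v = i}).ncard = b)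
    (hind : ∀ u v : V, Γ.Adj u v → f u ≠ f v)
    (hmc : ∀ (v : V) (i : Fin (m + 1)), f v ≠ i →
      ({w : V | Γ.Adj v w ∧ f w = i}).ncard = ℓ)
    (hb : 2 ≤ b) (hm : 2 ≤ m) (hl : 1 ≤ ℓ)
    (hk : k = ℓ * m) (hn : n = (m + 1) * b)
    (hnotmp : ∃ u v : V, f u ≠ f v ∧ ¬ Γ.Adj u v) :
    μ ≤ (m - 1) * ℓ :=
  stmt13_general Γ n k l μ m ℓ hsrg f hind hmc hnotmp
end

section
/- Under the hypotheses of an ℓ-multicover of K_{m+1} with m ≥ 2 and μ = (m−1)ℓ, and Γ not complete multipartite: Γ ≅ K_{b[b]} − bK_b (the complete b-partite graph with parts of size b minus a perfect set of b vertex-disjoint copies of K_b), and b = ℓ+1 = m+1. -/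
/-!
Two non-adjacent vertices `u`, `v` in different fibres have `μ = (m - 1)ℓ` common neighbours,
all lying in the `m - 1` remaining fibres, in each of which `u` has only `ℓ` neighbours; hence
`u` and `v` have the same neighbours in every third fibre. Propagating this through a third fibre
shows that every vertex has exactly one non-neighbour in each other fibre, so `b = ℓ + 1`, and
that "equal, or non-adjacent in different fibres" is an equivalence relation whose classes meet
every fibre exactly once. These classes are the deleted copies of `K_b`, which gives
`Γ ≅ K_{b[b]} - bK_b`. Finally, two vertices of one fibre have `m(ℓ - 1)` common neighbours,
and `m(ℓ - 1) = (m - 1)ℓ` forces `ℓ = m`.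
-/

/-- The graph `K_{b[b]} - bK_b`: the complete `b`-partite graph with parts of size `b`
minus `b` vertex-disjoint copies of `K_b`.  Vertices are pairs `(i,j)`, with parts given
by the first coordinate and the deleted `K_b`'s by the second coordinate, so two vertices
are adjacent iff they differ in both coordinates. -/
def kbbMinusKb (b : ℕ) : SimpleGraph (Fin b × Fin b) where
  Adj p q := p.1 ≠ q.1 ∧ p.2 ≠ q.2
  symm := by constructor; rintro p q ⟨h1, h2⟩; exact ⟨h1.symm, h2.symm⟩
  loopless := by constructor; rintro p ⟨h, -⟩; exact h rfl

open Finset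

lemma Setoid.bijective_prod_mk_quotient {V ι : Type*} (s : Setoid V) (f : V → ι)
    (h : ∀ v i, ∃! x, f x = i ∧ s v x) : Function.Bijective fun v => (f v, Quotient.mk s v) := by
  refine ⟨fun u v huv => ?_, fun ⟨i, q⟩ => q.inductionOn fun x => ?_⟩
  · obtain ⟨hf, hq⟩ := Prod.mk.inj huv
    exact (h u (f u)).unique ⟨rfl, s.refl u⟩ ⟨hf.symm, Quotient.exact hq⟩
  · obtain ⟨y, ⟨hy, hxy⟩, -⟩ := h x i
    exact ⟨y, Prod.ext hy (Quotient.sound (s.symm hxy))⟩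

def fibre {V ι : Type*} [Fintype V] [DecidableEq ι] (f : V → ι) (i : ι) : Finset V :=
  {v | f v = i}

namespace SimpleGraph

variable {V ι : Type*}

def Matched (G : SimpleGraph V) (f : V → ι) (u v : V) : Prop := ¬G.Adj u v ∧ (f u = f v → u = v)

lemma Matched.symm {G : SimpleGraph V} {f : V → ι} {u v : V} (h : G.Matched f u v) :
    G.Matched f v u :=
  ⟨G.adj_symm.mt h.1, fun h' => (h.2 h'.symm).symm⟩

variable [Fintype V] [DecidableEq ι]

section Defs

variable (G : SimpleGraph V) [DecidableRel G.Adj] (f : V → ι)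

def nbrsIn (v : V) (i : ι) : Finset V := {w | G.Adj v w ∧ f w = i}

structure IsMulticover (ℓ : ℕ) : Prop where
  adj_ne : ∀ ⦃u v⦄, G.Adj u v → f u ≠ f v
  card_nbrsIn : ∀ v i, f v ≠ i → #(G.nbrsIn f v i) = ℓ

end Defs

variable {G : SimpleGraph V} [DecidableRel G.Adj] {f : V → ι}

@[simp] lemma mem_fibre {i : ι} {v : V} : v ∈ fibre f i ↔ f v = i := by simp [fibre]

@[simp] lemma mem_nbrsIn {v w : V} {i : ι} : w ∈ G.nbrsIn f v i ↔ G.Adj v w ∧ f w = i := by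
  simp [nbrsIn]

lemma nbrsIn_subset_fibre (v : V) (i : ι) : G.nbrsIn f v i ⊆ fibre f i := fun _ hw =>
  mem_fibre.2 (mem_nbrsIn.1 hw).2

lemma mem_fibre_sdiff_nbrsIn [DecidableEq V] {u x : V} {j : ι} :
    x ∈ fibre f j \ G.nbrsIn f u j ↔ f x = j ∧ ¬G.Adj u x := by
  simp only [mem_sdiff, mem_fibre, mem_nbrsIn]; tauto

lemma nbrsIn_subset_erase [DecidableEq V] {u v : V} (hadj : ¬G.Adj u v) :
    G.nbrsIn f u (f v) ⊆ (fibre f (f v)).erase v := fun w hw =>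
  mem_erase.2 ⟨by rintro rfl; exact hadj (mem_nbrsIn.1 hw).1, nbrsIn_subset_fibre u (f v) hw⟩

lemma card_eq_card_mul_of_card_fibre [Fintype ι] {b : ℕ} (hsize : ∀ i, #(fibre f i) = b) :
    Fintype.card V = Fintype.card ι * b := by
  rw [← card_univ, card_eq_sum_card_fiberwise fun x _ => mem_univ (f x)]
  exact (sum_congr rfl fun i _ => hsize i).trans (by simp)

lemma card_commonNeighbors_eq_sum [DecidableEq V] [Fintype ι] (u v : V) :
    Fintype.card (G.commonNeighbors u v) = ∑ i, #(G.nbrsIn f u i ∩ G.nbrsIn f v i) := by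
  classical
  rw [← Set.toFinset_card, card_eq_sum_card_fiberwise fun x _ => mem_univ (f x)]
  congr! 2 with i
  ext w
  simp only [mem_filter, Set.mem_toFinset, mem_commonNeighbors, mem_inter, mem_nbrsIn]
  tauto

lemma sum_univ_eq_add_add_sum_erase_erase {M : Type*} [AddCommMonoid M] [Fintype ι] {p q : ι}
    (hpq : p ≠ q) (g : ι → M) : ∑ i, g i = g p + g q + ∑ i ∈ (univ.erase p).erase q, g i := by
  rw [← add_sum_erase _ _ (mem_univ p), ← add_sum_erase _ _ (mem_erase.2 ⟨hpq.symm, mem_univ q⟩),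
    add_assoc]

lemma card_erase_erase_univ [Fintype ι] {p q : ι} (hpq : p ≠ q) :
    #((univ.erase p).erase q) = Fintype.card ι - 2 := by
  rw [card_erase_of_mem (mem_erase.2 ⟨hpq.symm, mem_univ q⟩), card_erase_of_mem (mem_univ p),
    card_univ]
  omega

variable {ℓ b : ℕ}

namespace IsMulticover

lemma nbrsIn_self (hM : G.IsMulticover f ℓ) (v : V) : G.nbrsIn f v (f v) = ∅ :=
  eq_empty_of_forall_notMem fun _ hw => (hM.adj_ne (mem_nbrsIn.1 hw).1) (mem_nbrsIn.1 hw).2.symm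

lemma nbrsIn_eq_of_not_adj [DecidableEq V] [Fintype ι] (hM : G.IsMulticover f ℓ)
    (hμ : Pairwise fun u v ↦ ¬G.Adj u v →
      Fintype.card (G.commonNeighbors u v) = (Fintype.card ι - 2) * ℓ)
    {u v : V} (huv : f u ≠ f v) (hadj : ¬G.Adj u v) {j : ι} (hju : j ≠ f u) (hjv : j ≠ f v) :
    G.nbrsIn f u j = G.nbrsIn f v j := by
  set g : ι → ℕ := fun i => #(G.nbrsIn f u i ∩ G.nbrsIn f v i)
  have hsum : ∑ i ∈ (univ.erase (f u)).erase (f v), g i = (Fintype.card ι - 2) * ℓ := by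
    have := hμ (fun h => huv (congrArg f h)) hadj
    rw [card_commonNeighbors_eq_sum (f := f), sum_univ_eq_add_add_sum_erase_erase huv,
      hM.nbrsIn_self u, hM.nbrsIn_self v] at this
    simpa using this
  have hle : ∀ i ∈ (univ.erase (f u)).erase (f v), g i ≤ ℓ := fun i hi =>
    hM.card_nbrsIn u i (mem_erase.1 (mem_erase.1 hi).2).1.symm ▸ card_le_card inter_subset_left
  have hj : j ∈ (univ.erase (f u)).erase (f v) := mem_erase.2 ⟨hjv, mem_erase.2 ⟨hju, mem_univ j⟩⟩
  have hgj : ℓ ≤ g j := ((sum_eq_sum_iff_of_le hle).1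
    (by rw [hsum, sum_const, card_erase_erase_univ huv, smul_eq_mul]) j hj).ge
  exact (eq_of_subset_of_card_le inter_subset_left (hM.card_nbrsIn u j hju.symm ▸ hgj)).symm.trans
    (eq_of_subset_of_card_le inter_subset_right (hM.card_nbrsIn v j hjv.symm ▸ hgj))

lemma card_fibre_sdiff_nbrsIn [DecidableEq V] (hM : G.IsMulticover f ℓ)
    (hsize : ∀ i, #(fibre f i) = b) {u : V} {j : ι} (hj : f u ≠ j) :
    #(fibre f j \ G.nbrsIn f u j) = b - ℓ := by
  rw [card_sdiff_of_subset (nbrsIn_subset_fibre u j), hsize, hM.card_nbrsIn u j hj]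

lemma card_fibre_sdiff_nbrsIn_le [DecidableEq V] [Fintype ι] (hM : G.IsMulticover f ℓ)
    (hμ : Pairwise fun u v ↦ ¬G.Adj u v →
      Fintype.card (G.commonNeighbors u v) = (Fintype.card ι - 2) * ℓ)
    (hℓ : 0 < ℓ) {u : V} {j t : ι} (hju : j ≠ f u) (htu : t ≠ f u) (htj : t ≠ j) :
    #(fibre f j \ G.nbrsIn f u j) ≤ ℓ := by
  -- a neighbour `w` of `u` in a third fibre is adjacent to every non-neighbour of `u` in fibre `j`
  obtain ⟨w, hw⟩ : (G.nbrsIn f u t).Nonempty := by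
    rw [← card_pos, hM.card_nbrsIn u t htu.symm]; exact hℓ
  rw [← hM.card_nbrsIn w j ((mem_nbrsIn.1 hw).2 ▸ htj)]
  refine card_le_card fun x hx => ?_
  obtain ⟨hxj, hux⟩ := mem_fibre_sdiff_nbrsIn.1 hx
  have hw' : w ∈ G.nbrsIn f x t :=
    hM.nbrsIn_eq_of_not_adj hμ (hxj ▸ hju.symm) hux htu (hxj ▸ htj) ▸ hw
  exact mem_nbrsIn.2 ⟨(mem_nbrsIn.1 hw').1.symm, hxj⟩

lemma disjoint_nbrsIn_of_not_adj [DecidableEq V] [Fintype ι] (hM : G.IsMulticover f ℓ)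
    (hμ : Pairwise fun u v ↦ ¬G.Adj u v →
      Fintype.card (G.commonNeighbors u v) = (Fintype.card ι - 2) * ℓ)
    {u v v' : V} (hvv' : v ≠ v') (hfv : f v' = f v) (hvu : f v ≠ f u)
    (hadj : ¬G.Adj u v) (hadj' : ¬G.Adj u v') :
    Disjoint (G.nbrsIn f v (f u)) (G.nbrsIn f v' (f u)) := by
  have hthird : ∀ i ∈ (univ.erase (f u)).erase (f v),
      G.nbrsIn f v i ∩ G.nbrsIn f v' i = G.nbrsIn f u i := fun i hi => by
    obtain ⟨hiv, hiu⟩ : i ≠ f v ∧ i ≠ f u := by simpa using hi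
    rw [← hM.nbrsIn_eq_of_not_adj hμ hvu.symm hadj hiu hiv,
      ← hM.nbrsIn_eq_of_not_adj hμ (hfv ▸ hvu.symm) hadj' hiu (hfv ▸ hiv), inter_self]
  -- the `(card ι - 2) * ℓ` neighbours of `u` in the third fibres exhaust those common to `v`, `v'`
  have := hμ hvv' fun h => hM.adj_ne h hfv.symm
  rw [card_commonNeighbors_eq_sum (f := f), sum_univ_eq_add_add_sum_erase_erase hvu.symm,
    sum_congr rfl fun i hi => congrArg card (hthird i hi), hM.nbrsIn_self v,
    sum_congr rfl fun i hi => hM.card_nbrsIn u i (mem_erase.1 (mem_erase.1 hi).2).1.symm,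
    sum_const, card_erase_erase_univ hvu.symm, smul_eq_mul] at this
  simpa [disjoint_iff_inter_eq_empty] using this

lemma card_fibre_eq_succ [DecidableEq V] [Fintype ι] (hM : G.IsMulticover f ℓ)
    (hμ : Pairwise fun u v ↦ ¬G.Adj u v →
      Fintype.card (G.commonNeighbors u v) = (Fintype.card ι - 2) * ℓ)
    (hsize : ∀ i, #(fibre f i) = b) (hι : 2 < Fintype.card ι) (hℓ : 0 < ℓ)
    {u v : V} (huv : f u ≠ f v) (hadj : ¬G.Adj u v) : b = ℓ + 1 := by
  have hℓb : ℓ ≤ b - 1 := by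
    simpa [hM.card_nbrsIn u (f v) huv, hsize] using
      card_le_card (nbrsIn_subset_erase (G := G) (f := f) hadj)
  obtain ⟨t, ht⟩ : ((univ.erase (f u)).erase (f v)).Nonempty := by
    rw [← card_pos, card_erase_erase_univ huv]; omega
  obtain ⟨htv, htu⟩ : t ≠ f v ∧ t ≠ f u := by simpa using ht
  have hS := hM.card_fibre_sdiff_nbrsIn hsize huv
  have hSℓ := hM.card_fibre_sdiff_nbrsIn_le hμ hℓ huv.symm htu htv
  have hS1 : #(fibre f (f v) \ G.nbrsIn f u (f v)) ≤ 1 := by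
    by_contra! h
    obtain ⟨x, hx, y, hy, hxy⟩ := one_lt_card.1 h
    obtain ⟨hxv, hux⟩ := mem_fibre_sdiff_nbrsIn.1 hx
    obtain ⟨hyv, huy⟩ := mem_fibre_sdiff_nbrsIn.1 hy
    have hdisj :=
      hM.disjoint_nbrsIn_of_not_adj hμ hxy (hyv.trans hxv.symm) (hxv ▸ huv.symm) hux huy
    have := card_le_card (union_subset (nbrsIn_subset_erase (f := f) (G.adj_symm.mt hux))
      (nbrsIn_subset_erase (f := f) (G.adj_symm.mt huy)))
    rw [card_union_of_disjoint hdisj, card_erase_of_mem (mem_fibre.2 rfl : u ∈ fibre f (f u)),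
      hsize, hM.card_nbrsIn x (f u) (hxv ▸ huv.symm),
      hM.card_nbrsIn y (f u) (hyv ▸ huv.symm)] at this
    omega
  omega

lemma eq_of_not_adj_of_not_adj [DecidableEq V] (hM : G.IsMulticover f ℓ)
    (hsize : ∀ i, #(fibre f i) = b) (hb : b = ℓ + 1) {x u u' : V} (hxu : f x ≠ f u)
    (hu' : f u' = f u) (hadj : ¬G.Adj x u) (hadj' : ¬G.Adj x u') : u = u' :=
  card_le_one.1 (by rw [hM.card_fibre_sdiff_nbrsIn hsize hxu]; omega) u
    (mem_fibre_sdiff_nbrsIn.2 ⟨rfl, hadj⟩) u' (mem_fibre_sdiff_nbrsIn.2 ⟨hu', hadj'⟩)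

lemma card_index_eq_card_fibre [DecidableEq V] [Fintype ι] (hM : G.IsMulticover f ℓ)
    (hμ : Pairwise fun u v ↦ ¬G.Adj u v →
      Fintype.card (G.commonNeighbors u v) = (Fintype.card ι - 2) * ℓ)
    (hsize : ∀ i, #(fibre f i) = b) (hb : b = ℓ + 1) (hℓ : 0 < ℓ) (hι : 1 < Fintype.card ι) :
    Fintype.card ι = b := by
  obtain ⟨p⟩ : Nonempty ι := Fintype.card_pos_iff.1 (by omega)
  obtain ⟨u, hu, u', hu', huu'⟩ := one_lt_card.1 (by rw [hsize p]; omega : 1 < #(fibre f p))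
  rw [mem_fibre] at hu hu'
  have hinter : ∀ i ∈ univ.erase p, #(G.nbrsIn f u i ∩ G.nbrsIn f u' i) = ℓ - 1 := by
    intro i hi
    have hip : i ≠ p := ne_of_mem_erase hi
    have hunion : G.nbrsIn f u i ∪ G.nbrsIn f u' i = fibre f i := by
      refine (union_subset (nbrsIn_subset_fibre u i) (nbrsIn_subset_fibre u' i)).antisymm
        fun x hx => ?_
      by_contra hx'
      simp only [mem_union, mem_nbrsIn, mem_fibre.1 hx, and_true, not_or] at hx'
      exact huu' (hM.eq_of_not_adj_of_not_adj hsize hb (by rw [mem_fibre.1 hx, hu]; exact hip)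
        (hu'.trans hu.symm) (G.adj_symm.mt hx'.1) (G.adj_symm.mt hx'.2))
    have := card_union_add_card_inter (G.nbrsIn f u i) (G.nbrsIn f u' i)
    rw [hunion, hsize, hM.card_nbrsIn u i (hu ▸ hip.symm),
      hM.card_nbrsIn u' i (hu' ▸ hip.symm)] at this
    omega
  have := hμ huu' fun h => hM.adj_ne h (hu.trans hu'.symm)
  rw [card_commonNeighbors_eq_sum (f := f), ← add_sum_erase _ _ (mem_univ p), ← hu,
    hM.nbrsIn_self u, empty_inter, card_empty, zero_add, hu, sum_congr rfl hinter, sum_const,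
    card_erase_of_mem (mem_univ p), card_univ, smul_eq_mul] at this
  obtain ⟨c, hc⟩ : ∃ c, Fintype.card ι = c + 2 := ⟨Fintype.card ι - 2, by omega⟩
  obtain ⟨e, rfl⟩ : ∃ e, ℓ = e + 1 := ⟨ℓ - 1, by omega⟩
  rw [hc] at this ⊢
  rw [show c + 2 - 1 = c + 1 by omega, Nat.add_sub_cancel, Nat.add_sub_cancel] at this
  linarith

lemma adj_iff_not_matched (hM : G.IsMulticover f ℓ) {u v : V} :
    G.Adj u v ↔ f u ≠ f v ∧ ¬G.Matched f u v :=
  ⟨fun h => ⟨hM.adj_ne h, fun hm => hm.1 h⟩, fun ⟨huv, hm⟩ => by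
    by_contra h; exact hm ⟨h, fun h' => absurd h' huv⟩⟩

lemma matched_trans [DecidableEq V] [Fintype ι] (hM : G.IsMulticover f ℓ)
    (hμ : Pairwise fun u v ↦ ¬G.Adj u v →
      Fintype.card (G.commonNeighbors u v) = (Fintype.card ι - 2) * ℓ)
    (hsize : ∀ i, #(fibre f i) = b) (hb : b = ℓ + 1) {u v w : V}
    (huv : G.Matched f u v) (hvw : G.Matched f v w) : G.Matched f u w := by
  by_cases hfuv : f u = f v
  · rwa [huv.2 hfuv]
  by_cases hfvw : f v = f w
  · rwa [← hvw.2 hfvw]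
  by_cases hfuw : f u = f w
  · obtain rfl := hM.eq_of_not_adj_of_not_adj hsize hb (Ne.symm hfuv) hfuw.symm
      (G.adj_symm.mt huv.1) hvw.1
    exact ⟨G.irrefl, fun _ => rfl⟩
  refine ⟨fun h => hvw.1 ?_, fun h => absurd h hfuw⟩
  have hw : w ∈ G.nbrsIn f u (f w) := mem_nbrsIn.2 ⟨h, rfl⟩
  rw [hM.nbrsIn_eq_of_not_adj hμ hfuv huv.1 (Ne.symm hfuw) (Ne.symm hfvw)] at hw
  exact (mem_nbrsIn.1 hw).1

lemma existsUnique_matched [DecidableEq V] (hM : G.IsMulticover f ℓ)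
    (hsize : ∀ i, #(fibre f i) = b) (hb : b = ℓ + 1) (v : V) (i : ι) :
    ∃! x, f x = i ∧ G.Matched f v x := by
  by_cases hv : f v = i
  · exact ⟨v, ⟨hv, G.irrefl, fun _ => rfl⟩, fun x hx => (hx.2.2 (hv.trans hx.1.symm)).symm⟩
  obtain ⟨x, hx⟩ := card_eq_one.1 (by rw [hM.card_fibre_sdiff_nbrsIn hsize hv]; omega)
  obtain ⟨hxi, hvx⟩ := mem_fibre_sdiff_nbrsIn.1 (hx ▸ mem_singleton_self x)
  refine ⟨x, ⟨hxi, hvx, fun h => absurd (h.trans hxi) hv⟩, fun y hy => ?_⟩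
  exact hM.eq_of_not_adj_of_not_adj hsize hb (hy.1 ▸ hv) (hxi.trans hy.1.symm) hy.2.1 hvx

lemma nonempty_iso_kbbMinusKb [DecidableEq V] [Fintype ι] (hM : G.IsMulticover f ℓ)
    (hμ : Pairwise fun u v ↦ ¬G.Adj u v →
      Fintype.card (G.commonNeighbors u v) = (Fintype.card ι - 2) * ℓ)
    (hsize : ∀ i, #(fibre f i) = b) (hb : b = ℓ + 1) (hι : Fintype.card ι = b) :
    Nonempty (G ≃g kbbMinusKb b) := by
  classical
  let s : Setoid V := ⟨G.Matched f, ⟨fun _ => ⟨G.irrefl, fun _ => rfl⟩, Matched.symm,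
    hM.matched_trans hμ hsize hb⟩⟩
  let e := Equiv.ofBijective _
    (s.bijective_prod_mk_quotient f (hM.existsUnique_matched hsize hb))
  have hq : Fintype.card (Quotient s) = b := by
    have := Fintype.card_congr e
    rw [Fintype.card_prod, card_eq_card_mul_of_card_fibre hsize, hι] at this
    exact (Nat.eq_of_mul_eq_mul_left (by omega) this).symm
  refine ⟨⟨e.trans ((Fintype.equivFinOfCardEq hι).prodCongr (Fintype.equivFinOfCardEq hq)), ?_⟩⟩
  intro u v
  simp only [kbbMinusKb, e, Equiv.trans_apply, Equiv.ofBijective_apply, Equiv.prodCongr_apply,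
    Prod.map, ne_eq, EmbeddingLike.apply_eq_iff_eq]
  exact (hM.adj_iff_not_matched.trans
    (and_congr_right' (not_congr (@Quotient.eq _ s u v).symm))).symm

end IsMulticover
end SimpleGraph

theorem stmt14_general {V : Type*} [Fintype V] (Γ : SimpleGraph V) [DecidableRel Γ.Adj]
    (n k l μ m b ℓ : ℕ)
    (hsrg : Γ.IsSRGWith n k l μ)
    (f : V → Fin (m + 1))
    (hsize : ∀ i : Fin (m + 1), ({v : V | f v = i}).ncard = b)
    (hind : ∀ u v : V, Γ.Adj u v → f u ≠ f v)
    (hmc : ∀ (v : V) (i : Fin (m + 1)), f v ≠ i →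
      ({w : V | Γ.Adj v w ∧ f w = i}).ncard = ℓ)
    (hm : 2 ≤ m) (hl : 1 ≤ ℓ)
    (hmu : μ = (m - 1) * ℓ)
    (hnotmp : ∃ u v : V, f u ≠ f v ∧ ¬ Γ.Adj u v) :
    Nonempty (Γ ≃g kbbMinusKb b) ∧ b = ℓ + 1 ∧ b = m + 1 := by
  classical
  have hM : Γ.IsMulticover f ℓ :=
    ⟨hind, fun v i h => by
      simpa [SimpleGraph.nbrsIn, Set.ncard_eq_toFinset_card'] using hmc v i h⟩
  have hsize' : ∀ i, #(fibre f i) = b := fun i => by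
    simpa [fibre, Set.ncard_eq_toFinset_card'] using hsize i
  have hμ : Pairwise fun u v ↦ ¬Γ.Adj u v →
      Fintype.card (Γ.commonNeighbors u v) = (Fintype.card (Fin (m + 1)) - 2) * ℓ := by
    simpa [hmu] using hsrg.of_not_adj
  obtain ⟨u, v, huv, hadj⟩ := hnotmp
  have hbℓ := hM.card_fibre_eq_succ hμ hsize' (by rw [Fintype.card_fin]; omega) hl huv hadj
  have hbm := hM.card_index_eq_card_fibre hμ hsize' hbℓ hl (by rw [Fintype.card_fin]; omega)
  exact ⟨hM.nonempty_iso_kbbMinusKb hμ hsize' hbℓ hbm, hbℓ, hbm.symm.trans (Fintype.card_fin _)⟩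

/-- Under the hypotheses of an `ℓ`-multicover of `K_{m+1}` with `m ≥ 2`, `μ = (m-1)ℓ`,
and `Γ` not complete multipartite: `Γ ≅ K_{b[b]} - bK_b` and `b = ℓ+1 = m+1`. -/
theorem stmt14 {V : Type*} [Fintype V] (Γ : SimpleGraph V) [DecidableRel Γ.Adj]
    (n k l μ m b ℓ : ℕ)
    (hsrg : Γ.IsSRGWith n k l μ) (hconn : Γ.Connected)
    (hnc : ∃ u v : V, u ≠ v ∧ ¬ Γ.Adj u v)
    (f : V → Fin (m + 1))
    (hsize : ∀ i : Fin (m + 1), ({v : V | f v = i}).ncard = b)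
    (hind : ∀ u v : V, Γ.Adj u v → f u ≠ f v)
    (hmc : ∀ (v : V) (i : Fin (m + 1)), f v ≠ i →
      ({w : V | Γ.Adj v w ∧ f w = i}).ncard = ℓ)
    (hb : 2 ≤ b) (hm : 2 ≤ m) (hl : 1 ≤ ℓ)
    (hk : k = ℓ * m) (hn : n = (m + 1) * b)
    (hmu : μ = (m - 1) * ℓ)
    (hnotmp : ∃ u v : V, f u ≠ f v ∧ ¬ Γ.Adj u v) :
    Nonempty (Γ ≃g kbbMinusKb b) ∧ b = ℓ + 1 ∧ b = m + 1 :=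
  stmt14_general Γ n k l μ m b ℓ hsrg f hsize hind hmc hm hl hmu hnotmp
end

section
/- For b a prime power, there is a subgroup G ≤ Aut(K_b □ K_b), transitive on vertices and edges, with a nontrivial normal subgroup N whose quotient graph (K_b □ K_b)_N is isomorphic to K_b. Explicitly, with vertices labelled by GF(b)², N = {(i,j) ↦ (i+x, j+x) : x ∈ GF(b)} is normal in G = ⟨(i,j) ↦ (ri+s, rj+s'), (i,j) ↦ (j,i) : r ∈ GF(b)*, s,s' ∈ GF(b)⟩, and G is vertex- and edge-transitive on K_b □ K_b. -/
/-- The Cartesian product `K_b □ K_b` (rook's graph): vertices are pairs, adjacent iff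
they agree in exactly one coordinate. -/
def rookGraph (α : Type*) : SimpleGraph (α × α) where
  Adj p q := (p.1 = q.1 ∧ p.2 ≠ q.2) ∨ (p.2 = q.2 ∧ p.1 ≠ q.1)
  symm := by
    constructor
    rintro p q (⟨h1, h2⟩ | ⟨h1, h2⟩)
    exacts [Or.inl ⟨h1.symm, h2.symm⟩, Or.inr ⟨h1.symm, h2.symm⟩]
  loopless := by constructor; rintro p (⟨-, h⟩ | ⟨-, h⟩) <;> exact h rfl

instance rookGraph.adjDecidable (α : Type*) [DecidableEq α] :
    DecidableRel (rookGraph α).Adj := fun _ _ => by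
  unfold rookGraph; infer_instance

open MulAction

/-- The permutation `(i,j) ↦ (i+x, j+x)` of `F × F`. -/
def diagShift {F : Type*} [Field F] (x : F) : Equiv.Perm (F × F) :=
  Equiv.prodCongr (Equiv.addRight x) (Equiv.addRight x)

/-- The permutation `(i,j) ↦ (ri+s, rj+s')` of `F × F`, for `r ≠ 0`. -/
def affMap {F : Type*} [Field F] (r : Fˣ) (s s' : F) : Equiv.Perm (F × F) :=
  Equiv.prodCongr ((Equiv.mulLeft₀ (r : F) r.ne_zero).trans (Equiv.addRight s))
    ((Equiv.mulLeft₀ (r : F) r.ne_zero).trans (Equiv.addRight s'))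

/-!
The generators of `G` act coordinatewise or swap the coordinates, so they preserve the rook
graph, and conjugating the diagonal shift by `x` with `(i,j) ↦ (ri+s, rj+s')` gives the shift
by `rx`; hence `N ⊴ G`. Every edge is moved by `G` onto the base edge `(0,0) — (0,1)`: an affine
map of `F` sends the two distinct entries of the edge to `0` and `1` (after swapping the
coordinates if needed). The `N`-orbits are the fibres of `(i,j) ↦ i - j`, so there are `|F|` of
them, and two distinct orbits `d ≠ d'` contain the adjacent vertices `(d,0)` and `(d',0)`.
-/

namespace SimpleGraph

variable {V : Type*} (Γ : SimpleGraph V)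

def autSubgroup : Subgroup (Equiv.Perm V) where
  carrier := {g | ∀ u v, Γ.Adj (g u) (g v) ↔ Γ.Adj u v}
  one_mem' _ _ := Iff.rfl
  mul_mem' ha hb u v := (ha _ _).trans (hb u v)
  inv_mem' {g} hg u v := by rw [← hg (g⁻¹ u) (g⁻¹ v)]; simp

end SimpleGraph

section DiagonalShifts

variable {F : Type*} [Field F]

@[simp]
lemma diagShift_apply (x : F) (p : F × F) : diagShift x p = (p.1 + x, p.2 + x) := rfl

@[simp]
lemma affMap_apply (r : Fˣ) (s s' : F) (p : F × F) :
    affMap r s s' p = (r * p.1 + s, r * p.2 + s') := rfl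

lemma diagShift_eq_affMap (x : F) : diagShift x = affMap 1 x x := by
  ext p <;> simp

@[simp]
lemma diagShift_zero : diagShift (0 : F) = 1 := by
  ext p <;> simp

lemma diagShift_add (x y : F) : diagShift (x + y) = diagShift x * diagShift y := by
  ext p <;> simp [add_right_comm, add_assoc]

variable (F) in
def diagShiftHom : Multiplicative F →* Equiv.Perm (F × F) where
  toFun x := diagShift x.toAdd
  map_one' := diagShift_zero
  map_mul' x y := diagShift_add x.toAdd y.toAdd

variable (F) in
def diagShiftGroup : Subgroup (Equiv.Perm (F × F)) :=
  Subgroup.closure (Set.range diagShift)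

lemma mem_diagShiftGroup {n : Equiv.Perm (F × F)} :
    n ∈ diagShiftGroup F ↔ ∃ x, diagShift x = n := by
  have : Set.range (diagShift (F := F)) = (diagShiftHom F).range :=
    (Multiplicative.ofAdd.surjective.range_comp _).symm
  rw [diagShiftGroup, this, Subgroup.closure_eq]
  exact Multiplicative.ofAdd.surjective.exists

lemma diagShift_injective : Function.Injective (diagShift (F := F)) := by
  intro x y h
  simpa using congrArg (fun g : Equiv.Perm (F × F) => (g (0, 0)).1) h

end DiagonalShifts

section Conjugation

variable {F : Type*} [Field F]

lemma affMap_inv (r : Fˣ) (s s' : F) :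
    (affMap r s s')⁻¹ = affMap r⁻¹ (-(r⁻¹ * s)) (-(r⁻¹ * s')) := by
  refine inv_eq_of_mul_eq_one_left ?_
  ext p <;> simp [mul_add]

lemma affMap_conj_diagShift (r : Fˣ) (s s' x : F) :
    affMap r s s' * diagShift x * (affMap r s s')⁻¹ = diagShift (r * x) := by
  rw [mul_inv_eq_iff_eq_mul]
  ext p <;> simp <;> ring

lemma prodComm_conj_diagShift (x : F) :
    Equiv.prodComm F F * diagShift x * (Equiv.prodComm F F)⁻¹ = diagShift x := by
  rw [mul_inv_eq_iff_eq_mul]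
  ext p <;> simp

end Conjugation

section RookAutomorphisms

variable {α : Type*}

lemma prodCongr_mem_autSubgroup_rookGraph (e e' : Equiv.Perm α) :
    Equiv.prodCongr e e' ∈ (rookGraph α).autSubgroup := by
  intro u v
  simp [rookGraph]

lemma prodComm_mem_autSubgroup_rookGraph :
    Equiv.prodComm α α ∈ (rookGraph α).autSubgroup := by
  intro u v
  simp only [rookGraph, Equiv.prodComm_apply, Prod.fst_swap, Prod.snd_swap]
  tauto

end RookAutomorphisms

section AffineSwapGroup

variable (F : Type*) [Field F]

def affineSwapGroup : Subgroup (Equiv.Perm (F × F)) :=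
  Subgroup.closure
    (insert (Equiv.prodComm F F) (Set.range fun t : Fˣ × F × F => affMap t.1 t.2.1 t.2.2))

variable {F}

lemma affMap_mem_affineSwapGroup (r : Fˣ) (s s' : F) : affMap r s s' ∈ affineSwapGroup F :=
  Subgroup.subset_closure (Set.mem_insert_of_mem _ ⟨(r, s, s'), rfl⟩)

lemma prodComm_mem_affineSwapGroup : Equiv.prodComm F F ∈ affineSwapGroup F :=
  Subgroup.subset_closure (Set.mem_insert _ _)

lemma affineSwapGroup_le_autSubgroup : affineSwapGroup F ≤ (rookGraph F).autSubgroup := by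
  rw [affineSwapGroup, Subgroup.closure_le]
  rintro g (rfl | ⟨t, rfl⟩)
  exacts [prodComm_mem_autSubgroup_rookGraph, prodCongr_mem_autSubgroup_rookGraph _ _]

lemma diagShiftGroup_le_affineSwapGroup : diagShiftGroup F ≤ affineSwapGroup F := by
  rw [diagShiftGroup, Subgroup.closure_le]
  rintro _ ⟨x, rfl⟩
  rw [diagShift_eq_affMap]
  exact affMap_mem_affineSwapGroup 1 x x

lemma diagShiftGroup_ne_bot : diagShiftGroup F ≠ ⊥ := by
  intro h
  have : diagShift (1 : F) ∈ diagShiftGroup F := mem_diagShiftGroup.2 ⟨1, rfl⟩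
  rw [h, Subgroup.mem_bot, ← diagShift_zero] at this
  exact one_ne_zero (diagShift_injective this)

lemma conj_mem_diagShiftGroup {g n : Equiv.Perm (F × F)} (hg : g ∈ affineSwapGroup F)
    (hn : n ∈ diagShiftGroup F) : g * n * g⁻¹ ∈ diagShiftGroup F := by
  rw [mem_diagShiftGroup] at hn ⊢
  obtain ⟨x, rfl⟩ := hn
  induction hg using Subgroup.closure_induction'' generalizing x with
  | mem g hg =>
    obtain rfl | ⟨⟨r, s, s'⟩, rfl⟩ := hg
    exacts [⟨x, (prodComm_conj_diagShift x).symm⟩, ⟨r * x, (affMap_conj_diagShift r s s' x).symm⟩]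
  | inv_mem g hg =>
    obtain rfl | ⟨⟨r, s, s'⟩, rfl⟩ := hg
    · exact ⟨x, (prodComm_conj_diagShift x).symm⟩
    · rw [affMap_inv]
      exact ⟨_, (affMap_conj_diagShift _ _ _ x).symm⟩
  | one => exact ⟨x, by simp⟩
  | mul g h _ _ ihg ihh =>
    obtain ⟨y, hy⟩ := ihh x
    obtain ⟨z, hz⟩ := ihg y
    exact ⟨z, by rw [hz, hy]; group⟩

lemma exists_mem_affineSwapGroup_apply_eq (u v : F × F) : ∃ g ∈ affineSwapGroup F, g u = v :=
  ⟨affMap 1 (v.1 - u.1) (v.2 - u.2), affMap_mem_affineSwapGroup _ _ _, by simp⟩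

lemma exists_affMap_apply_eq_zero_one {u v : F × F} (h₁ : u.1 = v.1) (h₂ : u.2 ≠ v.2) :
    ∃ r s s', affMap r s s' u = (0, 0) ∧ affMap r s s' v = (0, 1) := by
  have hd : v.2 - u.2 ≠ 0 := sub_ne_zero.2 h₂.symm
  refine ⟨(Units.mk0 _ hd)⁻¹, -((v.2 - u.2)⁻¹ * u.1), -((v.2 - u.2)⁻¹ * u.2), ?_, ?_⟩
  · simp
  · simp only [affMap_apply, Units.val_inv_eq_inv_val, Units.val_mk0, ← h₁, Prod.mk.injEq]
    constructor
    · ring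
    · field_simp
      ring

lemma exists_mem_affineSwapGroup_apply_eq_zero_one {u v : F × F} (h : (rookGraph F).Adj u v) :
    ∃ g ∈ affineSwapGroup F, g u = (0, 0) ∧ g v = (0, 1) := by
  rcases h with ⟨h₁, h₂⟩ | ⟨h₁, h₂⟩
  · obtain ⟨r, s, s', hu, hv⟩ := exists_affMap_apply_eq_zero_one h₁ h₂
    exact ⟨affMap r s s', affMap_mem_affineSwapGroup r s s', hu, hv⟩
  · obtain ⟨r, s, s', hu, hv⟩ := exists_affMap_apply_eq_zero_one (u := u.swap) (v := v.swap) h₁ h₂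
    exact ⟨affMap r s s' * Equiv.prodComm F F,
      mul_mem (affMap_mem_affineSwapGroup r s s') prodComm_mem_affineSwapGroup, hu, hv⟩

lemma exists_mem_affineSwapGroup_apply_eq_of_adj {u v x y : F × F} (huv : (rookGraph F).Adj u v)
    (hxy : (rookGraph F).Adj x y) : ∃ g ∈ affineSwapGroup F, g u = x ∧ g v = y := by
  obtain ⟨g, hg, hgu, hgv⟩ := exists_mem_affineSwapGroup_apply_eq_zero_one huv
  obtain ⟨h, hh, hhx, hhy⟩ := exists_mem_affineSwapGroup_apply_eq_zero_one hxy
  exact ⟨h⁻¹ * g, mul_mem (inv_mem hh) hg, by simp [hgu, ← hhx], by simp [hgv, ← hhy]⟩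

end AffineSwapGroup

section DiagonalOrbits

variable {F : Type*} [Field F]

lemma orbitRel_diagShiftGroup_iff {p q : F × F} :
    (orbitRel (diagShiftGroup F) (F × F)).r p q ↔ p.1 - p.2 = q.1 - q.2 := by
  constructor
  · rintro ⟨⟨n, hn⟩, rfl⟩
    obtain ⟨x, rfl⟩ := mem_diagShiftGroup.1 hn
    change (q.1 + x) - (q.2 + x) = _
    ring
  · intro h
    refine ⟨⟨diagShift (p.2 - q.2), mem_diagShiftGroup.2 ⟨_, rfl⟩⟩, ?_⟩
    change (q.1 + (p.2 - q.2), q.2 + (p.2 - q.2)) = p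
    ext
    · linear_combination -h
    · ring

lemma mk_eq_mk_orbitRel_diagShiftGroup_iff {p q : F × F} :
    Quotient.mk (orbitRel (diagShiftGroup F) (F × F)) p = Quotient.mk _ q ↔
      p.1 - p.2 = q.1 - q.2 :=
  Quotient.eq.trans orbitRel_diagShiftGroup_iff

def diagShiftOrbitEquiv : Quotient (orbitRel (diagShiftGroup F) (F × F)) ≃ F where
  toFun := Quotient.lift (fun p => p.1 - p.2) fun _ _ => orbitRel_diagShiftGroup_iff.1
  invFun d := Quotient.mk _ (d, 0)
  left_inv := Quotient.ind fun _ => mk_eq_mk_orbitRel_diagShiftGroup_iff.2 (by simp)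
  right_inv d := by simp

lemma quotientGraph_rookGraph_diagShiftGroup :
    quotientGraph (rookGraph F) (diagShiftGroup F) = ⊤ := by
  ext X Y
  induction X using Quotient.ind with | _ p =>
  induction Y using Quotient.ind with | _ q =>
  refine ⟨SimpleGraph.Adj.ne, fun h => ⟨h, (p.1 - p.2, 0), (q.1 - q.2, 0), ?_, ?_, ?_⟩⟩
  · exact mk_eq_mk_orbitRel_diagShiftGroup_iff.2 (by simp)
  · exact mk_eq_mk_orbitRel_diagShiftGroup_iff.2 (by simp)
  · exact Or.inr ⟨rfl, fun hpq => h (mk_eq_mk_orbitRel_diagShiftGroup_iff.2 (by simpa using hpq))⟩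

end DiagonalOrbits

/-- For `b = |F|` a prime power (`F` the field of order `b`), the group
`G = ⟨(i,j) ↦ (ri+s, rj+s'), (i,j) ↦ (j,i)⟩ ≤ Aut(K_b □ K_b)` is vertex- and
edge-transitive, and `N = {(i,j) ↦ (i+x, j+x) : x ∈ F}` is a nontrivial normal
subgroup of `G` whose quotient graph is the complete graph `K_b`. -/
theorem stmt18 (F : Type*) [Field F] [Fintype F] :
    let Γ := rookGraph F
    let N : Subgroup (Equiv.Perm (F × F)) := Subgroup.closure (Set.range diagShift)
    let G : Subgroup (Equiv.Perm (F × F)) := Subgroup.closure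
      (insert (Equiv.prodComm F F)
        (Set.range fun t : Fˣ × F × F => affMap t.1 t.2.1 t.2.2))
    -- `G` consists of automorphisms of `Γ`
    (∀ g ∈ G, ∀ u v : F × F, Γ.Adj (g u) (g v) ↔ Γ.Adj u v) ∧
    -- `N` is a nontrivial subgroup of `G`, normal in `G`
    N ≤ G ∧ N ≠ ⊥ ∧
    (∀ g ∈ G, ∀ n ∈ N, g * n * g⁻¹ ∈ N) ∧
    -- `G` is transitive on vertices and on edges
    (∀ u v : F × F, ∃ g ∈ G, g u = v) ∧
    (∀ u v x y : F × F, Γ.Adj u v → Γ.Adj x y →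
      ∃ g ∈ G, (g u = x ∧ g v = y) ∨ (g u = y ∧ g v = x)) ∧
    -- the quotient graph `Γ_N` is the complete graph `K_b`, `b = |F|`
    Nat.card (Quotient (orbitRel N (F × F))) = Fintype.card F ∧
    (∀ X Y : Quotient (orbitRel N (F × F)), X ≠ Y →
      (quotientGraph Γ N).Adj X Y) := by
  intro Γ N G
  refine ⟨fun g hg => affineSwapGroup_le_autSubgroup hg, diagShiftGroup_le_affineSwapGroup,
    diagShiftGroup_ne_bot, fun g hg n hn => conj_mem_diagShiftGroup hg hn,
    exists_mem_affineSwapGroup_apply_eq, fun u v x y huv hxy => ?_, ?_, fun X Y h => ?_⟩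
  · obtain ⟨g, hg, hu, hv⟩ := exists_mem_affineSwapGroup_apply_eq_of_adj huv hxy
    exact ⟨g, hg, Or.inl ⟨hu, hv⟩⟩
  · exact (Nat.card_congr diagShiftOrbitEquiv).trans Nat.card_eq_fintype_card
  · have hcomplete : quotientGraph Γ N = ⊤ := quotientGraph_rookGraph_diagShiftGroup
    rw [hcomplete]
    exact h
end
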